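/- arXiv:2502.05488 — 6 statements merged into one kernel-verified Lean document; each statement's English description precedes it below -/
import Mathlib

section
/- For every graph G with at least one edge and every integer k ≥ 2, mod(G) ≤ (k/(k−1)) · max over partitions 𝒜 of V(G) with |𝒜| ≤ k of mod_𝒜(G). In particular, mod(G) ≤ 2 · max over partitions 𝒜 with |𝒜| ≤ 2 of mod_𝒜(G). -/
/-!
Let `W = vol(G)` and let `B u v = A u v / W - d u * d v / W ^ 2` be the modularity matrix. The score
of a partition is the sum of `B u v` over the pairs `(u, v)` lying in a common part, and the sum of
all entries of `B` is `0`. Colour the parts of a partition `𝒜` independently and uniformly with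
`k` colours and merge the parts of equal colour. Pairs inside a part stay together, pairs in
different parts are joined with probability `1 / k`, so the expected score of the merged partition
is `mod_𝒜 + (0 - mod_𝒜) / k = (1 - 1 / k) mod_𝒜`. Some colouring does at least this well, and it
has at most `k` parts.
-/

open MeasureTheory Filter Topology
open scoped Classical

namespace RIG

variable {V : Type*}

/-- The number of edges of a graph. -/
noncomputable def edgeCount [Fintype V] (G : SimpleGraph V) : ℕ := G.edgeSet.ncard

/-- The number of edges of `G` with both endpoints in `S`. -/
noncomputable def edgesIn [Fintype V] (G : SimpleGraph V) (S : Finset V) : ℕ :=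
  {e ∈ G.edgeSet | ∀ v ∈ e, v ∈ S}.ncard

/-- The number of edges of `G` with exactly one endpoint in `S`. -/
noncomputable def crossEdges [Fintype V] (G : SimpleGraph V) (S : Finset V) : ℕ :=
  {e ∈ G.edgeSet | (∃ v ∈ e, v ∈ S) ∧ ∃ v ∈ e, v ∉ S}.ncard

/-- The sum of the degrees (in `G`) of the vertices of `S`. -/
noncomputable def vol [Fintype V] (G : SimpleGraph V) (S : Finset V) : ℕ :=
  ∑ v ∈ S, G.degree v

/-- The modularity score of a partition of the vertex set. -/
noncomputable def modScore [Fintype V] [DecidableEq V] (G : SimpleGraph V)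
    (P : Finpartition (Finset.univ : Finset V)) : ℝ :=
  ∑ S ∈ P.parts,
    ((edgesIn G S : ℝ) / (edgeCount G : ℝ) -
      ((vol G S : ℝ) / (vol G Finset.univ : ℝ)) ^ 2)

/-- The modularity of a graph: the maximum of the modularity scores over all
partitions of the vertex set. -/
noncomputable def modularity [Fintype V] [DecidableEq V] (G : SimpleGraph V) : ℝ :=
  ⨆ P : Finpartition (Finset.univ : Finset V), modScore G P

/-- The Bernoulli measure on `Bool` with success probability `p`. -/
noncomputable def bernoulliB (p : ℝ) : Measure Bool :=
  ENNReal.ofReal p • Measure.dirac true + ENNReal.ofReal (1 - p) • Measure.dirac false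

/-- The law of the attribute assignment of the binomial random intersection graph
`G(n,m,p)`: each vertex chooses each attribute independently with probability `p`. -/
noncomputable def rigMeasure (n m : ℕ) (p : ℝ) : Measure (Fin n → Fin m → Bool) :=
  Measure.pi fun _ => Measure.pi fun _ => bernoulliB p

/-- The intersection graph determined by an attribute assignment: two distinct vertices
are adjacent iff they share an attribute. -/
def rigGraph {n m : ℕ} (ω : Fin n → Fin m → Bool) : SimpleGraph (Fin n) :=
  SimpleGraph.fromRel fun u v => ∃ i, ω u i = true ∧ ω v i = true

open Finset

section Counting

variable {α β : Type*} [Fintype α] [DecidableEq α] [Fintype β] [DecidableEq β]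

theorem card_mul_card_filter_apply_eq {a b : α} (hab : a ≠ b) :
    Fintype.card β * #{f : α → β | f a = f b} = Fintype.card (α → β) := by
  let e : (α → β) ≃ β × {f : α → β // f a = f b} :=
    { toFun := fun f => ⟨f b, Function.update f b (f a), by
        rw [Function.update_of_ne hab, Function.update_self]⟩
      invFun := fun p => Function.update p.2.1 b p.1
      left_inv := fun f => by simp
      right_inv := fun ⟨c, f, hf⟩ => by
        ext <;> simp [Function.update_of_ne hab, hf] }
  rw [Fintype.card_congr e, Fintype.card_prod, Fintype.card_subtype]

theorem card_mul_sum_ite_apply_eq (a b : α) (x : ℝ) :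
    (Fintype.card β : ℝ) * ∑ f : α → β, (if f a = f b then x else 0) =
      Fintype.card (α → β) * x +
        (Fintype.card β - 1) * Fintype.card (α → β) * (if a = b then x else 0) := by
  rw [← sum_filter, sum_const, nsmul_eq_mul]
  by_cases hab : a = b
  · simp [hab]
    ring
  · rw [if_neg hab, ← mul_assoc, ← Nat.cast_mul, card_mul_card_filter_apply_eq hab]
    ring

end Counting

section ModularityMatrix

variable [Fintype V] (G : SimpleGraph V)

theorem two_mul_edgesIn (S : Finset V) :
    2 * edgesIn G S = ∑ u ∈ S, ∑ v ∈ S, if G.Adj u v then 1 else 0 := by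
  set H := SimpleGraph.fromEdgeSet {e ∈ G.edgeSet | ∀ v ∈ e, v ∈ S}
  have hH : H.edgeSet = {e ∈ G.edgeSet | ∀ v ∈ e, v ∈ S} := by
    rw [SimpleGraph.edgeSet_fromEdgeSet, sdiff_eq_left.2]
    exact Set.disjoint_left.2 fun e he => G.not_isDiag_of_mem_edgeSet he.1
  have hAdj : ∀ u v, H.Adj u v ↔ G.Adj u v ∧ u ∈ S ∧ v ∈ S := by
    intro u v
    simp only [H, SimpleGraph.fromEdgeSet_adj, Set.mem_ofPred_eq, SimpleGraph.mem_edgeSet,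
      Sym2.mem_iff, forall_eq_or_imp, forall_eq]
    exact ⟨fun h => h.1, fun h => ⟨h, h.1.ne⟩⟩
  calc 2 * edgesIn G S = 2 * #H.edgeFinset := by
        rw [← Set.ncard_coe_finset, SimpleGraph.coe_edgeFinset, hH, edgesIn]
    _ = #{p : V × V | H.Adj p.1 p.2} := by convert H.two_mul_card_edgeFinset
    _ = #{p ∈ S ×ˢ S | G.Adj p.1 p.2} := by
        congr 1
        ext p
        simp only [hAdj, mem_filter, mem_univ, mem_product]
        tauto
    _ = _ := by rw [card_filter, sum_product]

theorem two_mul_edgeCount : 2 * edgeCount G = vol G univ := by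
  rw [vol, G.sum_degrees_eq_twice_card_edges, edgeCount, ← Set.ncard_coe_finset,
    SimpleGraph.coe_edgeFinset]

theorem edgesIn_univ : edgesIn G univ = edgeCount G := by
  simp [edgesIn, edgeCount]

noncomputable def modularityMatrix (u v : V) : ℝ :=
  (if G.Adj u v then 1 else 0) / vol G univ - G.degree u * G.degree v / (vol G univ : ℝ) ^ 2

theorem sum_sum_modularityMatrix (S : Finset V) :
    ∑ u ∈ S, ∑ v ∈ S, modularityMatrix G u v =
      edgesIn G S / edgeCount G - (vol G S / vol G univ : ℝ) ^ 2 := by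
  have hAdj : ∑ u ∈ S, ∑ v ∈ S, (if G.Adj u v then 1 else 0 : ℝ) = 2 * edgesIn G S := by
    exact_mod_cast (two_mul_edgesIn G S).symm
  have hDeg : ∑ u ∈ S, ∑ v ∈ S, (G.degree u * G.degree v : ℝ) = (vol G S : ℝ) ^ 2 := by
    rw [sq, vol, Nat.cast_sum, sum_mul_sum]
  have hVol : (vol G univ : ℝ) = 2 * edgeCount G := by
    exact_mod_cast (two_mul_edgeCount G).symm
  simp only [modularityMatrix, sum_sub_distrib, ← sum_div, hAdj, hDeg]
  rw [div_pow, hVol, mul_div_mul_left _ _ two_ne_zero]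

theorem sum_modularityMatrix : ∑ u, ∑ v, modularityMatrix G u v = 0 := by
  rw [sum_sum_modularityMatrix, edgesIn_univ]
  rcases eq_or_ne (edgeCount G) 0 with hG | hG
  · simp [hG, ← two_mul_edgeCount]
  · have hVol : (vol G univ : ℝ) ≠ 0 := by
      rw [← two_mul_edgeCount]
      positivity
    rw [div_self (by exact_mod_cast hG), div_self hVol]
    norm_num

end ModularityMatrix

section Partition

variable [Fintype V] [DecidableEq V] (G : SimpleGraph V)

theorem sum_eq_sum_sum_parts {M : Type*} [AddCommMonoid M] (P : Finpartition (univ : Finset V))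
    (F : V → M) : ∑ u, F u = ∑ S ∈ P.parts, ∑ u ∈ S, F u := by
  calc ∑ u, F u = ∑ u ∈ P.parts.biUnion id, F u := by rw [P.biUnion_parts]
    _ = _ := sum_biUnion P.supIndep.pairwiseDisjoint

theorem modScore_eq_sum_modularityMatrix (P : Finpartition (univ : Finset V)) :
    modScore G P = ∑ u, ∑ v, if P.part u = P.part v then modularityMatrix G u v else 0 := by
  rw [sum_eq_sum_sum_parts P, modScore]
  refine sum_congr rfl fun S hS => ?_
  rw [← sum_sum_modularityMatrix]
  refine sum_congr rfl fun u hu => ?_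
  simp_rw [P.part_eq_of_mem hS hu, eq_comm (a := S), P.part_eq_iff_mem hS]
  rw [sum_ite_mem, univ_inter]

noncomputable def fiberPartition {ι : Type*} (g : V → ι) : Finpartition (univ : Finset V) :=
  Finpartition.ofSetoid (Setoid.ker g)

theorem part_fiberPartition_eq_part_iff {ι : Type*} (g : V → ι) {u v : V} :
    (fiberPartition g).part u = (fiberPartition g).part v ↔ g u = g v := by
  rw [fiberPartition, ← Finpartition.mem_part_iff_part_eq_part _ (mem_univ _) (mem_univ _),
    Finpartition.mem_part_ofSetoid_iff_rel, Setoid.ker_def, eq_comm]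

theorem card_parts_fiberPartition_le {ι : Type*} [Fintype ι] (g : V → ι) :
    #(fiberPartition g).parts ≤ Fintype.card ι := by
  rw [fiberPartition, Finpartition.ofSetoid, Finpartition.ofSetSetoid_parts]
  calc _ ≤ #(univ.image fun j : ι => ({v | g v = j} : Finset V)) := by
        refine card_le_card fun S hS => ?_
        obtain ⟨u, -, rfl⟩ := mem_image.1 hS
        refine mem_image.2 ⟨g u, mem_univ _, ?_⟩
        ext v
        simp [Setoid.ker_def, eq_comm]
    _ ≤ Fintype.card ι := card_image_le

theorem modScore_fiberPartition {ι : Type*} [DecidableEq ι] (g : V → ι) :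
    modScore G (fiberPartition g) =
      ∑ u, ∑ v, if g u = g v then modularityMatrix G u v else 0 := by
  rw [modScore_eq_sum_modularityMatrix]
  simp only [part_fiberPartition_eq_part_iff]

theorem card_mul_sum_modScore_fiberPartition_comp (k : ℕ) (P : Finpartition (univ : Finset V)) :
    (k : ℝ) * ∑ f : Finset V → Fin k, modScore G (fiberPartition (f ∘ P.part)) =
      (k - 1) * Fintype.card (Finset V → Fin k) * modScore G P := by
  calc _ = ∑ u, ∑ v, (k : ℝ) * ∑ f : Finset V → Fin k,
        (if f (P.part u) = f (P.part v) then modularityMatrix G u v else 0) := by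
        simp only [modScore_fiberPartition, Function.comp_apply]
        rw [sum_comm, mul_sum]
        refine sum_congr rfl fun u _ => ?_
        rw [sum_comm, mul_sum]
    _ = ∑ u, ∑ v, (Fintype.card (Finset V → Fin k) * modularityMatrix G u v +
          (k - 1) * Fintype.card (Finset V → Fin k) *
            (if P.part u = P.part v then modularityMatrix G u v else 0)) := by
        simpa only [Fintype.card_fin] using
          sum_congr rfl fun u _ => sum_congr rfl fun v _ =>
            card_mul_sum_ite_apply_eq (β := Fin k) (P.part u) (P.part v) (modularityMatrix G u v)
    _ = _ := by
        simp only [sum_add_distrib, ← mul_sum, sum_modularityMatrix,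
          ← modScore_eq_sum_modularityMatrix]
        ring

theorem exists_card_parts_le_and_modScore_le_mul {k : ℕ} (hk : 1 < k)
    (P : Finpartition (univ : Finset V)) :
    ∃ Q : Finpartition (univ : Finset V), #Q.parts ≤ k ∧
      modScore G P ≤ k / (k - 1) * modScore G Q := by
  have hk' : (1 : ℝ) < k := by exact_mod_cast hk
  have : Nonempty (Finset V → Fin k) := ⟨fun _ => ⟨0, by omega⟩⟩
  have havg : ∑ _f : Finset V → Fin k, (k - 1) / k * modScore G P ≤
      ∑ f : Finset V → Fin k, modScore G (fiberPartition (f ∘ P.part)) := by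
    refine le_of_eq (mul_left_cancel₀ (by positivity : (k : ℝ) ≠ 0) ?_)
    rw [card_mul_sum_modScore_fiberPartition_comp, sum_const, card_univ, nsmul_eq_mul]
    field_simp
  obtain ⟨f, -, hf⟩ := exists_le_of_sum_le univ_nonempty havg
  refine ⟨fiberPartition (f ∘ P.part),
    (card_parts_fiberPartition_le _).trans (Fintype.card_fin k).le, ?_⟩
  calc modScore G P = k / (k - 1) * ((k - 1) / k * modScore G P) := by
        field_simp [(by linarith : (k : ℝ) - 1 ≠ 0)]
    _ ≤ _ := mul_le_mul_of_nonneg_left hf (div_nonneg (by linarith) (by linarith))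

theorem modularity_le_mul_sSup_bounded_parts {k : ℕ} (hk : 2 ≤ k) :
    modularity G ≤ k / (k - 1) *
      sSup {x : ℝ | ∃ P : Finpartition (univ : Finset V), #P.parts ≤ k ∧ x = modScore G P} := by
  have hbdd : BddAbove {x : ℝ | ∃ P : Finpartition (univ : Finset V),
      #P.parts ≤ k ∧ x = modScore G P} := by
    refine ((Set.finite_range (modScore G)).subset ?_).bddAbove
    rintro _ ⟨P, -, rfl⟩
    exact ⟨P, rfl⟩
  have hk' : (2 : ℝ) ≤ k := by exact_mod_cast hk
  refine ciSup_le fun P => ?_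
  obtain ⟨Q, hQ, hPQ⟩ := exists_card_parts_le_and_modScore_le_mul G hk P
  exact hPQ.trans (mul_le_mul_of_nonneg_left (le_csSup hbdd ⟨Q, hQ, rfl⟩)
    (div_nonneg (by linarith) (by linarith)))

end Partition

theorem modularity_le_bounded_parts_general {V : Type*} [Fintype V] [DecidableEq V]
    (G : SimpleGraph V) (k : ℕ) (hk : 2 ≤ k) :
    modularity G ≤ ((k : ℝ) / ((k : ℝ) - 1)) *
        sSup {x : ℝ | ∃ P : Finpartition (Finset.univ : Finset V),
          P.parts.card ≤ k ∧ x = modScore G P} ∧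
    modularity G ≤ 2 *
        sSup {x : ℝ | ∃ P : Finpartition (Finset.univ : Finset V),
          P.parts.card ≤ 2 ∧ x = modScore G P} := by
  refine ⟨modularity_le_mul_sSup_bounded_parts G hk, ?_⟩
  have h2 := modularity_le_mul_sSup_bounded_parts G le_rfl
  norm_num at h2
  exact h2

/-- Lemma (Dinh–Thai): for a graph `G` with at least one edge and `k ≥ 2`,
`mod(G) ≤ k/(k-1) · max_{|𝒜| ≤ k} mod_𝒜(G)`; in particular
`mod(G) ≤ 2 · max_{|𝒜| ≤ 2} mod_𝒜(G)`. -/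
theorem modularity_le_bounded_parts {V : Type*} [Fintype V] [DecidableEq V]
    (G : SimpleGraph V) (hG : G.edgeSet.Nonempty) (k : ℕ) (hk : 2 ≤ k) :
    modularity G ≤ ((k : ℝ) / ((k : ℝ) - 1)) *
        sSup {x : ℝ | ∃ P : Finpartition (Finset.univ : Finset V),
          P.parts.card ≤ k ∧ x = modScore G P} ∧
    modularity G ≤ 2 *
        sSup {x : ℝ | ∃ P : Finpartition (Finset.univ : Finset V),
          P.parts.card ≤ 2 ∧ x = modScore G P} :=
  modularity_le_bounded_parts_general G k hk

end RIG
end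

section
/- Suppose m = m_n and p = p_n satisfy m p² = o(1) and n² m p² → ∞ as n → ∞. Then the number of edges e(G(n,m,p)) satisfies 2 e(G(n,m,p)) / (n² m p²) → 1 in probability; that is, for every ε > 0, with high probability |2 e(G(n,m,p)) − n² m p²| ≤ ε n² m p². -/
open MeasureTheory Filter Topology
open scoped Classical

namespace RIG

variable {V : Type*}

/-!
Write `Y = ∑_{u ≠ v} 𝟙[u ~ v] = 2 e(G)` and let `q = 1 - (1 - p²)^m` be the probability that
two given vertices share an attribute, so that `m p² - (m p²)² / 2 ≤ q ≤ m p²` and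
`𝔼 Y = n (n - 1) q`. In `𝔼 Y²`, two vertex-disjoint pairs are independent and contribute `q²`,
a pair together with itself or its reverse contributes at most `q`, and two pairs through a
common vertex `s` contribute `𝔼_s [ℙ(s ~ v ∣ 𝒲(s))²] ≤ p² 𝔼 |𝒲(s)|² ≤ m p³ + m² p⁴`. Hence
`𝔼 (Y - n² m p²)² / (n² m p²)² ≤ 2/n² + (m p²)²/2 + 2/(n² m p²) + 4/(n m p) + 4/n`, which
tends to `0` because `m p² → 0` and `n m p ≥ √(n² m p²) → ∞`; Chebyshev's inequality concludes.

All expectations are finite sums against the product weight of the attribute assignment, and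
each is computed by integrating out one vertex (or one attribute) at a time.
-/

open Finset Function

section ProductWeight

variable {ι X : Type*} [Fintype ι] {w : X → ℝ}

variable (w) in
def piWeight (ω : ι → X) : ℝ := ∏ i, w (ω i)

lemma piWeight_nonneg (hw : ∀ x, 0 ≤ w x) (ω : ι → X) : 0 ≤ piWeight w ω :=
  prod_nonneg fun i _ => hw (ω i)

lemma measure_pi_singleton_eq_ofReal_piWeight [MeasurableSpace X] {μ : Measure X}
    [SigmaFinite μ] (hw : ∀ x, 0 ≤ w x) (hμ : ∀ x, μ {x} = ENNReal.ofReal (w x)) (ω : ι → X) :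
    Measure.pi (fun _ : ι => μ) {ω} = ENNReal.ofReal (piWeight w ω) := by
  rw [← Set.univ_pi_singleton ω, Measure.pi_pi, piWeight,
    ENNReal.ofReal_prod_of_nonneg fun i _ => hw (ω i)]
  simp only [hμ]

variable [DecidableEq ι] [Fintype X]

lemma sum_piWeight (hw : ∑ x, w x = 1) : ∑ ω : ι → X, piWeight w ω = 1 := by
  simp [piWeight, ← Fintype.prod_sum, hw]

lemma sum_piWeight_mul_const (hw : ∑ x, w x = 1) (c : ℝ) :
    ∑ ω : ι → X, piWeight w ω * c = c := by
  rw [← sum_mul, sum_piWeight hw, one_mul]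

lemma sum_piWeight_mul_eq_sum_update (hw : ∑ x, w x = 1) (u : ι) (F : (ι → X) → ℝ) :
    ∑ ω, piWeight w ω * F ω = ∑ ω, piWeight w ω * ∑ x, w x * F (update ω u x) := by
  let e := Equiv.funSplitAt u X
  have hweight : ∀ y g, piWeight w (e.symm (y, g)) = w y * ∏ j, w (g j) := by
    intro y g
    rw [piWeight, Fintype.prod_eq_mul_prod_subtype_ne _ u]
    simp only [e, Equiv.funSplitAt, Equiv.piSplitAt, Equiv.coe_fn_symm_mk, dif_pos, ne_eq]
    congr 1
    exact prod_congr rfl fun j _ => by simp [j.2]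
  have hupdate : ∀ y g x, update (e.symm (y, g)) u x = e.symm (x, g) := by
    intro y g x
    ext j
    by_cases h : j = u
    · subst h
      simp [e, Equiv.funSplitAt, Equiv.piSplitAt]
    · simp [e, Equiv.funSplitAt, Equiv.piSplitAt, h]
  rw [← e.symm.sum_comp, ← e.symm.sum_comp, Fintype.sum_prod_type, Fintype.sum_prod_type]
  simp only [hweight, hupdate]
  rw [sum_comm]
  conv_rhs => rw [sum_comm]
  refine sum_congr rfl fun g _ => ?_
  rw [← sum_mul, ← sum_mul, hw, one_mul, mul_sum]
  exact sum_congr rfl fun x _ => by ring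

lemma sum_piWeight_mul_eq_of_sum_update_eq (hw : ∑ x, w x = 1) (u : ι)
    {F G : (ι → X) → ℝ} (h : ∀ ω, ∑ x, w x * F (update ω u x) = G ω) :
    ∑ ω, piWeight w ω * F ω = ∑ ω, piWeight w ω * G ω := by
  simp only [sum_piWeight_mul_eq_sum_update hw u F, h]

lemma sum_piWeight_mul_prod (f : ι → X → ℝ) :
    ∑ ω, piWeight w ω * ∏ i, f i (ω i) = ∏ i, ∑ x, w x * f i x := by
  simp only [piWeight, ← prod_mul_distrib, Fintype.prod_sum]

end ProductWeight

lemma sum_filter_lt_abs_sub_le_div_sq {X : Type*} [Fintype X] {w : X → ℝ}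
    (hw : ∀ x, 0 ≤ w x) (f : X → ℝ) (a : ℝ) {δ : ℝ} (hδ : 0 < δ) :
    ∑ x ∈ univ.filter (fun x => δ < |f x - a|), w x ≤ (∑ x, w x * (f x - a) ^ 2) / δ ^ 2 := by
  rw [le_div_iff₀ (by positivity), sum_mul]
  calc ∑ x ∈ univ.filter (fun x => δ < |f x - a|), w x * δ ^ 2
      ≤ ∑ x ∈ univ.filter (fun x => δ < |f x - a|), w x * (f x - a) ^ 2 := by
        refine sum_le_sum fun x hx => ?_
        rw [← sq_abs (f x - a)]
        gcongr
        · exact hw x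
        · exact (mem_filter.1 hx).2.le
    _ ≤ ∑ x, w x * (f x - a) ^ 2 :=
        sum_le_sum_of_subset_of_nonneg (filter_subset _ _) fun x _ _ =>
          mul_nonneg (hw x) (sq_nonneg _)

lemma sum_ite_mem_le_card_mul {β : Type*} [DecidableEq β] (s T : Finset β) {c : ℝ}
    (hc : 0 ≤ c) : ∑ x ∈ s, (if x ∈ T then c else 0) ≤ #T * c := by
  rw [sum_ite_mem s T fun _ => c, sum_const, nsmul_eq_mul]
  gcongr
  exact inter_subset_right

lemma one_sub_pow_le {x : ℝ} (hx0 : 0 ≤ x) (hx1 : x ≤ 1) (k : ℕ) :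
    (1 - x) ^ k ≤ 1 - k * x + (k * x) ^ 2 / 2 := by
  induction k with
  | zero => simp
  | succ k ih =>
    rw [pow_succ]
    push_cast
    nlinarith [mul_le_mul_of_nonneg_right ih (sub_nonneg.mpr hx1),
      mul_nonneg (mul_nonneg (sq_nonneg (k : ℝ)) (sq_nonneg x)) hx0, sq_nonneg x,
      mul_nonneg (Nat.cast_nonneg (α := ℝ) k) (mul_nonneg hx0 hx0)]

lemma deviation_ratio_le {n m p q N : ℝ} (hn : 1 ≤ n) (hm : 0 < m) (hp : 0 < p)
    (hN : N = n ^ 2 - n) (hq0 : 0 ≤ q) (hq_le : q ≤ m * p ^ 2)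
    (hq_ge : m * p ^ 2 - (m * p ^ 2) ^ 2 / 2 ≤ q) :
    ((n ^ 2 * m * p ^ 2 - N * q) ^ 2 + N * (2 * q + 4 * n * (m * p ^ 3 + m ^ 2 * p ^ 4))) /
        (n ^ 2 * m * p ^ 2) ^ 2 ≤
      2 / n ^ 2 + (m * p ^ 2) ^ 2 / 2 + 2 / (n ^ 2 * m * p ^ 2) + 4 / (n * m * p) + 4 / n := by
  set c := m * p ^ 2 with hc
  set D := m * p ^ 3 + m ^ 2 * p ^ 4
  have hc0 : 0 < c := by positivity
  have hn0 : 0 < n := by linarith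
  have hN0 : 0 ≤ N := by rw [hN]; nlinarith
  have hNn : N ≤ n ^ 2 := by rw [hN]; linarith
  have hNq : N * q ≤ n ^ 2 * c := mul_le_mul hNn hq_le hq0 (sq_nonneg n)
  have hbias : n ^ 2 * c - N * q ≤ n * c + n ^ 2 * c * c / 2 := by
    rw [hN]
    nlinarith [mul_nonneg hn0.le (mul_nonneg hc0.le hc0.le),
      mul_le_mul_of_nonneg_left hq_ge hN0]
  have hbias_sq : (n ^ 2 * c - N * q) ^ 2 ≤ 2 * (n * c) ^ 2 + 2 * (n ^ 2 * c * c / 2) ^ 2 := by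
    nlinarith [sq_nonneg (n * c - n ^ 2 * c * c / 2)]
  have hD : N * (4 * n * D) ≤ n ^ 2 * (4 * n * D) := mul_le_mul_of_nonneg_right hNn (by positivity)
  have hrhs : (2 / n ^ 2 + c ^ 2 / 2 + 2 / (n ^ 2 * c) + 4 / (n * m * p) + 4 / n) *
      (n ^ 2 * c) ^ 2 =
      2 * (n * c) ^ 2 + 2 * (n ^ 2 * c * c / 2) ^ 2 + 2 * (n ^ 2 * c) + n ^ 2 * (4 * n * D) := by
    rw [hc]
    field_simp
    ring
  rw [show n ^ 2 * m * p ^ 2 = n ^ 2 * c by rw [hc]; ring, div_le_iff₀ (by positivity), hrhs]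
  nlinarith

section Attributes

variable {α : Type*} [Fintype α] {p : ℝ}

def bernWeight (p : ℝ) (b : Bool) : ℝ := if b then p else 1 - p

lemma bernWeight_nonneg (hp0 : 0 ≤ p) (hp1 : p ≤ 1) (b : Bool) : 0 ≤ bernWeight p b := by
  cases b <;> simp [bernWeight] <;> linarith

lemma sum_bernWeight : ∑ b, bernWeight p b = 1 := by simp [bernWeight]

lemma sum_bernWeight_mul_toNat : ∑ b, bernWeight p b * (b.toNat : ℝ) = p := by
  simp [bernWeight]

lemma piWeight_bernWeight_nonneg (hp0 : 0 ≤ p) (hp1 : p ≤ 1) (a : α → Bool) :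
    0 ≤ piWeight (bernWeight p) a :=
  piWeight_nonneg (bernWeight_nonneg hp0 hp1) a

noncomputable def shareInd (a b : α → Bool) : ℝ :=
  if ∃ i, a i = true ∧ b i = true then 1 else 0

lemma shareInd_nonneg (a b : α → Bool) : 0 ≤ shareInd a b := by
  unfold shareInd; split_ifs <;> norm_num

lemma shareInd_le_one (a b : α → Bool) : shareInd a b ≤ 1 := by
  unfold shareInd; split_ifs <;> norm_num

lemma shareInd_comm (a b : α → Bool) : shareInd a b = shareInd b a := by
  simp only [shareInd, and_comm]

lemma shareInd_le_sum (a b : α → Bool) :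
    shareInd a b ≤ ∑ i, ((a i).toNat : ℝ) * (b i).toNat := by
  have hterm : ∀ i, (0 : ℝ) ≤ (a i).toNat * (b i).toNat := fun i => by positivity
  unfold shareInd
  split_ifs with h
  · obtain ⟨i, hai, hbi⟩ := h
    calc (1 : ℝ) = (a i).toNat * (b i).toNat := by simp [hai, hbi]
      _ ≤ _ := single_le_sum (fun j _ => hterm j) (mem_univ i)
  · exact sum_nonneg fun i _ => hterm i

lemma shareInd_eq_one_sub_prod (a b : α → Bool) :
    shareInd a b = 1 - ∏ i, (1 - ((a i).toNat : ℝ) * (b i).toNat) := by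
  have hfactor : ∀ i, 1 - ((a i).toNat : ℝ) * (b i).toNat =
      if a i = true ∧ b i = true then 0 else 1 := by
    intro i
    cases a i <;> cases b i <;> simp
  simp only [hfactor, shareInd]
  split_ifs with h
  · obtain ⟨i, hi⟩ := h
    have hzero : ∏ j, (if a j = true ∧ b j = true then (0 : ℝ) else 1) = 0 :=
      Finset.prod_eq_zero (mem_univ i) (if_pos hi)
    rw [hzero, sub_zero]
  · rw [prod_eq_one fun i _ => if_neg fun hi => h ⟨i, hi⟩, sub_self]

variable [DecidableEq α]

lemma sum_piWeight_bernWeight : ∑ a : α → Bool, piWeight (bernWeight p) a = 1 :=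
  sum_piWeight sum_bernWeight

lemma sum_piWeight_bernWeight_mul_toNat (i : α) :
    ∑ a : α → Bool, piWeight (bernWeight p) a * ((a i).toNat : ℝ) = p := by
  rw [sum_piWeight_mul_eq_sum_update sum_bernWeight i]
  simp only [update_self, sum_bernWeight_mul_toNat]
  exact sum_piWeight_mul_const sum_bernWeight p

lemma sum_piWeight_bernWeight_mul_toNat_mul_toNat (i j : α) :
    ∑ a : α → Bool, piWeight (bernWeight p) a * (((a i).toNat : ℝ) * (a j).toNat) =
      if i = j then p else p ^ 2 := by
  split_ifs with hij
  · subst hij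
    have hsq : ∀ b : Bool, ((b.toNat : ℝ) * b.toNat) = b.toNat := fun b => by cases b <;> simp
    simp only [hsq, sum_piWeight_bernWeight_mul_toNat]
  · rw [sum_piWeight_mul_eq_sum_update sum_bernWeight i]
    simp only [update_self, update_of_ne (Ne.symm hij), ← mul_assoc, ← sum_mul,
      sum_bernWeight_mul_toNat, mul_right_comm _ p, sum_piWeight_bernWeight_mul_toNat]
    ring

lemma sum_piWeight_bernWeight_mul_sum_toNat_sq_le :
    ∑ a : α → Bool, piWeight (bernWeight p) a * (∑ i, ((a i).toNat : ℝ)) ^ 2 ≤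
      Fintype.card α * p + (Fintype.card α : ℝ) ^ 2 * p ^ 2 := by
  have hpair : ∀ i j : α, (if i = j then p else p ^ 2) ≤ p ^ 2 + if i = j then p else 0 := by
    intro i j
    split_ifs <;> nlinarith
  calc ∑ a : α → Bool, piWeight (bernWeight p) a * (∑ i, ((a i).toNat : ℝ)) ^ 2
      = ∑ i, ∑ j, ∑ a : α → Bool,
          piWeight (bernWeight p) a * (((a i).toNat : ℝ) * (a j).toNat) := by
        simp only [sq, sum_mul_sum]
        simp only [mul_sum]
        rw [sum_comm]
        exact sum_congr rfl fun i _ => sum_comm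
    _ ≤ ∑ i : α, ∑ j : α, (p ^ 2 + if i = j then p else 0) := by
        simp only [sum_piWeight_bernWeight_mul_toNat_mul_toNat]
        gcongr with i _ j _
        exact hpair i j
    _ = Fintype.card α * p + (Fintype.card α : ℝ) ^ 2 * p ^ 2 := by
        simp [sum_add_distrib]
        ring

variable (p) in
noncomputable def shareProb (a : α → Bool) : ℝ :=
  ∑ b, piWeight (bernWeight p) b * shareInd a b

variable (α p) in
noncomputable def edgeProb : ℝ := ∑ a : α → Bool, piWeight (bernWeight p) a * shareProb p a

lemma shareProb_nonneg (hp0 : 0 ≤ p) (hp1 : p ≤ 1) (a : α → Bool) : 0 ≤ shareProb p a :=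
  sum_nonneg fun b _ => mul_nonneg (piWeight_bernWeight_nonneg hp0 hp1 b) (shareInd_nonneg a b)

lemma shareProb_le (hp0 : 0 ≤ p) (hp1 : p ≤ 1) (a : α → Bool) :
    shareProb p a ≤ p * ∑ i, ((a i).toNat : ℝ) :=
  calc shareProb p a
      ≤ ∑ b, piWeight (bernWeight p) b * ∑ i, ((a i).toNat : ℝ) * (b i).toNat := by
        unfold shareProb
        gcongr with b
        · exact piWeight_bernWeight_nonneg hp0 hp1 b
        · exact shareInd_le_sum a b
    _ = p * ∑ i, ((a i).toNat : ℝ) := by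
        simp only [mul_sum]
        rw [sum_comm]
        refine sum_congr rfl fun i _ => ?_
        simp only [mul_left_comm _ ((a i).toNat : ℝ), ← mul_sum]
        rw [sum_piWeight_bernWeight_mul_toNat, mul_comm]

lemma sum_piWeight_mul_shareProb_sq_le (hp0 : 0 ≤ p) (hp1 : p ≤ 1) :
    ∑ a : α → Bool, piWeight (bernWeight p) a * shareProb p a ^ 2 ≤
      Fintype.card α * p ^ 3 + (Fintype.card α : ℝ) ^ 2 * p ^ 4 :=
  calc ∑ a : α → Bool, piWeight (bernWeight p) a * shareProb p a ^ 2
      ≤ ∑ a : α → Bool, piWeight (bernWeight p) a * (p * ∑ i, ((a i).toNat : ℝ)) ^ 2 := by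
        gcongr with a
        · exact piWeight_bernWeight_nonneg hp0 hp1 a
        · exact shareProb_nonneg hp0 hp1 a
        · exact shareProb_le hp0 hp1 a
    _ = p ^ 2 * ∑ a : α → Bool, piWeight (bernWeight p) a * (∑ i, ((a i).toNat : ℝ)) ^ 2 := by
        rw [mul_sum]
        exact sum_congr rfl fun a _ => by ring
    _ ≤ p ^ 2 * (Fintype.card α * p + (Fintype.card α : ℝ) ^ 2 * p ^ 2) := by
        gcongr
        exact sum_piWeight_bernWeight_mul_sum_toNat_sq_le
    _ = _ := by ring

lemma shareProb_eq (a : α → Bool) : shareProb p a = 1 - ∏ i, (1 - p * (a i).toNat) := by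
  have hfactor : ∀ i, ∑ y, bernWeight p y * (1 - ((a i).toNat : ℝ) * y.toNat) =
      1 - p * (a i).toNat := fun i => by
    simp [bernWeight]
    ring
  simp only [shareProb, shareInd_eq_one_sub_prod, mul_sub, mul_one, sum_sub_distrib,
    sum_piWeight_bernWeight]
  rw [sum_piWeight_mul_prod fun i (y : Bool) => 1 - ((a i).toNat : ℝ) * y.toNat]
  simp only [hfactor]

lemma edgeProb_eq : edgeProb α p = 1 - (1 - p ^ 2) ^ Fintype.card α := by
  have hfactor : ∑ y, bernWeight p y * (1 - p * y.toNat) = 1 - p ^ 2 := by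
    simp [bernWeight]
    ring
  simp only [edgeProb, shareProb_eq, mul_sub, mul_one, sum_sub_distrib, sum_piWeight_bernWeight]
  rw [sum_piWeight_mul_prod fun _ (y : Bool) => 1 - p * y.toNat]
  simp only [hfactor, prod_const, card_univ]

lemma edgeProb_le (hp0 : 0 ≤ p) (hp1 : p ≤ 1) : edgeProb α p ≤ Fintype.card α * p ^ 2 := by
  have := one_add_mul_le_pow (a := -p ^ 2) (by nlinarith) (Fintype.card α)
  rw [← sub_eq_add_neg] at this
  rw [edgeProb_eq]
  linarith

lemma le_edgeProb (hp0 : 0 ≤ p) (hp1 : p ≤ 1) :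
    Fintype.card α * p ^ 2 - (Fintype.card α * p ^ 2) ^ 2 / 2 ≤ edgeProb α p := by
  have := one_sub_pow_le (x := p ^ 2) (by positivity) (by nlinarith) (Fintype.card α)
  rw [edgeProb_eq]
  linarith

lemma edgeProb_nonneg (hp0 : 0 ≤ p) (hp1 : p ≤ 1) : 0 ≤ edgeProb α p :=
  sum_nonneg fun a _ =>
    mul_nonneg (piWeight_bernWeight_nonneg hp0 hp1 a) (shareProb_nonneg hp0 hp1 a)

end Attributes

section Vertices

abbrev rigWeight {α : Type*} [Fintype V] [Fintype α] (p : ℝ) : (V → α → Bool) → ℝ :=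
  piWeight (piWeight (bernWeight p))

lemma rigWeight_nonneg {α : Type*} [Fintype V] [Fintype α] {p : ℝ} (hp0 : 0 ≤ p) (hp1 : p ≤ 1)
    (ω : V → α → Bool) : 0 ≤ rigWeight p ω :=
  piWeight_nonneg (piWeight_bernWeight_nonneg hp0 hp1) ω

variable [Fintype V] [DecidableEq V] {α : Type*} [Fintype α] [DecidableEq α] {p : ℝ}

lemma sum_rigWeight : ∑ ω : V → α → Bool, rigWeight p ω = 1 :=
  sum_piWeight sum_piWeight_bernWeight

lemma sum_rigWeight_mul_shareInd {u v : V} (huv : u ≠ v) :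
    ∑ ω : V → α → Bool, rigWeight p ω * shareInd (ω u) (ω v) = edgeProb α p :=
  calc _ = ∑ ω : V → α → Bool, rigWeight p ω * shareProb p (ω u) :=
        sum_piWeight_mul_eq_of_sum_update_eq sum_piWeight_bernWeight v fun ω => by
          simp only [update_self, update_of_ne huv, shareProb]
    _ = ∑ ω : V → α → Bool, rigWeight p ω * edgeProb α p :=
        sum_piWeight_mul_eq_of_sum_update_eq sum_piWeight_bernWeight u fun ω => by
          simp only [update_self, edgeProb]
    _ = edgeProb α p := sum_piWeight_mul_const sum_piWeight_bernWeight _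

lemma sum_rigWeight_mul_shareInd_mul_shareInd_of_disjoint {u v x y : V} (huv : u ≠ v)
    (hxy : x ≠ y) (hxu : x ≠ u) (hyu : y ≠ u) (hxv : x ≠ v) (hyv : y ≠ v) :
    ∑ ω : V → α → Bool, rigWeight p ω * (shareInd (ω u) (ω v) * shareInd (ω x) (ω y)) =
      edgeProb α p ^ 2 :=
  calc _ = ∑ ω : V → α → Bool, rigWeight p ω * (shareProb p (ω u) * shareInd (ω x) (ω y)) :=
        sum_piWeight_mul_eq_of_sum_update_eq sum_piWeight_bernWeight v fun ω => by
          simp only [update_self, update_of_ne huv, update_of_ne hxv, update_of_ne hyv,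
            shareProb, sum_mul, mul_assoc]
    _ = ∑ ω : V → α → Bool, rigWeight p ω * (edgeProb α p * shareInd (ω x) (ω y)) :=
        sum_piWeight_mul_eq_of_sum_update_eq sum_piWeight_bernWeight u fun ω => by
          simp only [update_self, update_of_ne hxu, update_of_ne hyu, edgeProb, sum_mul,
            mul_assoc]
    _ = edgeProb α p ^ 2 := by
        simp only [mul_left_comm _ (edgeProb α p), ← mul_sum, sum_rigWeight_mul_shareInd hxy, sq]

lemma sum_rigWeight_mul_shareInd_mul_shareInd_of_path {s a b : V} (hsa : s ≠ a) (hsb : s ≠ b)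
    (hab : a ≠ b) :
    ∑ ω : V → α → Bool, rigWeight p ω * (shareInd (ω s) (ω a) * shareInd (ω s) (ω b)) =
      ∑ c : α → Bool, piWeight (bernWeight p) c * shareProb p c ^ 2 :=
  calc _ = ∑ ω : V → α → Bool, rigWeight p ω * (shareProb p (ω s) * shareInd (ω s) (ω b)) :=
        sum_piWeight_mul_eq_of_sum_update_eq sum_piWeight_bernWeight a fun ω => by
          simp only [update_self, update_of_ne hsa, update_of_ne hab.symm, shareProb, sum_mul,
            mul_assoc]
    _ = ∑ ω : V → α → Bool, rigWeight p ω * shareProb p (ω s) ^ 2 :=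
        sum_piWeight_mul_eq_of_sum_update_eq sum_piWeight_bernWeight b fun ω => by
          simp only [update_self, update_of_ne hsb, mul_left_comm _ (shareProb p (ω s)),
            ← mul_sum, sq]
          rfl
    _ = ∑ ω : V → α → Bool, rigWeight p ω *
          ∑ c : α → Bool, piWeight (bernWeight p) c * shareProb p c ^ 2 :=
        sum_piWeight_mul_eq_of_sum_update_eq sum_piWeight_bernWeight s fun ω => by
          simp only [update_self]
    _ = _ := sum_piWeight_mul_const sum_piWeight_bernWeight _

lemma sum_rigWeight_mul_shareInd_mul_shareInd_of_common_vertex {u v x y : V} (huv : u ≠ v)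
    (hxy : x ≠ y) (hcommon : x = u ∨ x = v ∨ y = u ∨ y = v) (hne : (x, y) ≠ (u, v))
    (hne' : (x, y) ≠ (v, u)) :
    ∑ ω : V → α → Bool, rigWeight p ω * (shareInd (ω u) (ω v) * shareInd (ω x) (ω y)) =
      ∑ c : α → Bool, piWeight (bernWeight p) c * shareProb p c ^ 2 := by
  -- The two pairs share exactly one vertex; orient both pairs away from it.
  obtain rfl | rfl | rfl | rfl := hcommon
  · exact sum_rigWeight_mul_shareInd_mul_shareInd_of_path huv hxy fun h => hne (by rw [h])
  · simpa only [fun ω : V → α → Bool => shareInd_comm (ω u) (ω x)] using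
      sum_rigWeight_mul_shareInd_mul_shareInd_of_path huv.symm hxy fun h => hne' (by rw [h])
  · simpa only [fun ω : V → α → Bool => shareInd_comm (ω x) (ω y)] using
      sum_rigWeight_mul_shareInd_mul_shareInd_of_path huv hxy.symm fun h => hne' (by rw [h])
  · simpa only [fun ω : V → α → Bool => shareInd_comm (ω u) (ω y),
      fun ω : V → α → Bool => shareInd_comm (ω x) (ω y)] using
      sum_rigWeight_mul_shareInd_mul_shareInd_of_path huv.symm hxy.symm fun h => hne (by rw [h])

noncomputable def incidentPairs (P : V × V) : Finset (V × V) :=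
  ({P.1, P.2} ×ˢ univ) ∪ (univ ×ˢ {P.1, P.2})

lemma card_incidentPairs_le (P : V × V) : #(incidentPairs P) ≤ 4 * Fintype.card V := by
  have h2 : #({P.1, P.2} : Finset V) ≤ 2 := card_le_two
  calc #(incidentPairs P)
      ≤ #(({P.1, P.2} : Finset V) ×ˢ univ) + #(univ ×ˢ ({P.1, P.2} : Finset V)) :=
        card_union_le _ _
    _ ≤ 4 * Fintype.card V := by
        rw [card_product, card_product, card_univ]
        nlinarith

lemma sum_rigWeight_mul_shareInd_mul_shareInd_le (hp0 : 0 ≤ p) (hp1 : p ≤ 1) {P Q : V × V}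
    (hP : P.1 ≠ P.2) (hQ : Q.1 ≠ Q.2) :
    ∑ ω : V → α → Bool, rigWeight p ω * (shareInd (ω P.1) (ω P.2) * shareInd (ω Q.1) (ω Q.2)) ≤
      edgeProb α p ^ 2 + (if Q ∈ ({P, P.swap} : Finset _) then edgeProb α p else 0) +
        if Q ∈ incidentPairs P then
          Fintype.card α * p ^ 3 + (Fintype.card α : ℝ) ^ 2 * p ^ 4 else 0 := by
  obtain ⟨u, v⟩ := P
  obtain ⟨x, y⟩ := Q
  dsimp only [Prod.swap_prod_mk] at hP hQ ⊢
  have hq : 0 ≤ edgeProb α p := edgeProb_nonneg hp0 hp1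
  by_cases hI : (x, y) ∈ incidentPairs (u, v)
  · rw [if_pos hI]
    simp only [incidentPairs, mem_union, mem_product, mem_insert, mem_singleton, mem_univ,
      and_true, true_and, or_assoc] at hI
    by_cases hS : (x, y) ∈ ({(u, v), (v, u)} : Finset _)
    · rw [if_pos hS]
      have hD : 0 ≤ Fintype.card α * p ^ 3 + (Fintype.card α : ℝ) ^ 2 * p ^ 4 := by positivity
      calc _ ≤ ∑ ω : V → α → Bool, rigWeight p ω * shareInd (ω u) (ω v) := by
            gcongr with ω
            · exact rigWeight_nonneg hp0 hp1 ω
            · exact mul_le_of_le_one_right (shareInd_nonneg _ _) (shareInd_le_one _ _)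
        _ = edgeProb α p := sum_rigWeight_mul_shareInd hP
        _ ≤ _ := by nlinarith
    · rw [if_neg hS]
      simp only [mem_insert, mem_singleton, not_or] at hS
      rw [sum_rigWeight_mul_shareInd_mul_shareInd_of_common_vertex hP hQ hI hS.1 hS.2]
      nlinarith [sum_piWeight_mul_shareProb_sq_le (α := α) hp0 hp1]
  · rw [if_neg hI]
    simp only [incidentPairs, mem_union, mem_product, mem_insert, mem_singleton, mem_univ,
      and_true, true_and, not_or] at hI
    rw [if_neg (by simp [hI.1.1, hI.1.2]),
      sum_rigWeight_mul_shareInd_mul_shareInd_of_disjoint hP hQ hI.1.1 hI.2.1 hI.1.2 hI.2.2]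
    linarith

noncomputable def adjPairCount (ω : V → α → Bool) : ℝ :=
  ∑ P ∈ univ.offDiag, shareInd (ω P.1) (ω P.2)

lemma sum_rigWeight_mul_adjPairCount :
    ∑ ω : V → α → Bool, rigWeight p ω * adjPairCount ω =
      #(univ.offDiag : Finset (V × V)) * edgeProb α p := by
  simp only [adjPairCount, mul_sum]
  rw [sum_comm, sum_congr rfl fun P hP => sum_rigWeight_mul_shareInd (mem_offDiag.1 hP).2.2,
    sum_const, nsmul_eq_mul]

lemma sum_rigWeight_mul_adjPairCount_sq_le (hp0 : 0 ≤ p) (hp1 : p ≤ 1) :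
    ∑ ω : V → α → Bool, rigWeight p ω * adjPairCount ω ^ 2 ≤
      #(univ.offDiag : Finset (V × V)) * (#(univ.offDiag : Finset (V × V)) * edgeProb α p ^ 2 +
        2 * edgeProb α p +
        4 * Fintype.card V * (Fintype.card α * p ^ 3 + (Fintype.card α : ℝ) ^ 2 * p ^ 4)) := by
  set N := #(univ.offDiag : Finset (V × V))
  set D := Fintype.card α * p ^ 3 + (Fintype.card α : ℝ) ^ 2 * p ^ 4
  have hq : 0 ≤ edgeProb α p := edgeProb_nonneg hp0 hp1
  have hD : 0 ≤ D := by positivity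
  have hrow : ∀ P ∈ (univ.offDiag : Finset (V × V)),
      ∑ Q ∈ univ.offDiag, ∑ ω : V → α → Bool,
        rigWeight p ω * (shareInd (ω P.1) (ω P.2) * shareInd (ω Q.1) (ω Q.2)) ≤
      N * edgeProb α p ^ 2 + 2 * edgeProb α p + 4 * Fintype.card V * D := by
    intro P hP
    have hswap : (#({P, P.swap} : Finset (V × V)) : ℝ) ≤ 2 := by exact_mod_cast card_le_two
    have hinc : (#(incidentPairs P) : ℝ) ≤ 4 * Fintype.card V := by
      exact_mod_cast card_incidentPairs_le P
    calc _ ≤ ∑ Q ∈ univ.offDiag, (edgeProb α p ^ 2 +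
            (if Q ∈ ({P, P.swap} : Finset _) then edgeProb α p else 0) +
            if Q ∈ incidentPairs P then D else 0) :=
          sum_le_sum fun Q hQ => sum_rigWeight_mul_shareInd_mul_shareInd_le hp0 hp1
            (mem_offDiag.1 hP).2.2 (mem_offDiag.1 hQ).2.2
      _ ≤ _ := by
          rw [sum_add_distrib, sum_add_distrib, sum_const, nsmul_eq_mul]
          have h1 := sum_ite_mem_le_card_mul univ.offDiag {P, P.swap} hq
          have h2 := sum_ite_mem_le_card_mul univ.offDiag (incidentPairs P) hD
          linarith [mul_le_mul_of_nonneg_right hswap hq, mul_le_mul_of_nonneg_right hinc hD]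
  calc _ = ∑ P ∈ univ.offDiag, ∑ Q ∈ univ.offDiag, ∑ ω : V → α → Bool,
          rigWeight p ω * (shareInd (ω P.1) (ω P.2) * shareInd (ω Q.1) (ω Q.2)) := by
        simp only [adjPairCount, sq, sum_mul_sum]
        simp only [mul_sum]
        rw [sum_comm]
        exact sum_congr rfl fun P _ => sum_comm
    _ ≤ ∑ _P ∈ (univ.offDiag : Finset (V × V)),
          (N * edgeProb α p ^ 2 + 2 * edgeProb α p + 4 * Fintype.card V * D) := sum_le_sum hrow
    _ = _ := by rw [sum_const, nsmul_eq_mul]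

lemma sum_rigWeight_mul_adjPairCount_sub_sq_le (hp0 : 0 ≤ p) (hp1 : p ≤ 1) (A : ℝ) :
    ∑ ω : V → α → Bool, rigWeight p ω * (adjPairCount ω - A) ^ 2 ≤
      (A - #(univ.offDiag : Finset (V × V)) * edgeProb α p) ^ 2 +
        #(univ.offDiag : Finset (V × V)) * (2 * edgeProb α p +
          4 * Fintype.card V * (Fintype.card α * p ^ 3 + (Fintype.card α : ℝ) ^ 2 * p ^ 4)) := by
  have hexpand : ∀ ω : V → α → Bool, rigWeight p ω * (adjPairCount ω - A) ^ 2 =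
      rigWeight p ω * adjPairCount ω ^ 2 - 2 * A * (rigWeight p ω * adjPairCount ω) +
        rigWeight p ω * A ^ 2 := fun ω => by ring
  simp only [hexpand, sum_add_distrib, sum_sub_distrib, ← mul_sum, ← sum_mul,
    sum_rigWeight_mul_adjPairCount, sum_rigWeight, one_mul]
  nlinarith [sum_rigWeight_mul_adjPairCount_sq_le (V := V) (α := α) hp0 hp1]

lemma sum_rigWeight_filter_far_le (hp0 : 0 ≤ p) (hp1 : p ≤ 1) {ε : ℝ} (hε : 0 < ε)
    (hA : 0 < (Fintype.card V : ℝ) ^ 2 * Fintype.card α * p ^ 2) :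
    ∑ ω ∈ univ.filter (fun ω : V → α → Bool =>
        ε * ((Fintype.card V : ℝ) ^ 2 * Fintype.card α * p ^ 2) <
          |adjPairCount ω - (Fintype.card V : ℝ) ^ 2 * Fintype.card α * p ^ 2|), rigWeight p ω ≤
    (2 / (Fintype.card V : ℝ) ^ 2 + ((Fintype.card α : ℝ) * p ^ 2) ^ 2 / 2 +
      2 / ((Fintype.card V : ℝ) ^ 2 * Fintype.card α * p ^ 2) +
      4 / ((Fintype.card V : ℝ) * Fintype.card α * p) + 4 / (Fintype.card V : ℝ)) / ε ^ 2 := by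
  have hV : Fintype.card V ≠ 0 := by rintro h; simp [h] at hA
  have hα : Fintype.card α ≠ 0 := by rintro h; simp [h] at hA
  have hp : 0 < p := lt_of_le_of_ne hp0 (by rintro rfl; simp at hA)
  have hN : (#(univ.offDiag : Finset (V × V)) : ℝ) =
      (Fintype.card V : ℝ) ^ 2 - Fintype.card V := by
    rw [offDiag_card, card_univ, Nat.cast_sub (Nat.le_mul_self _)]
    push_cast
    ring
  refine (sum_filter_lt_abs_sub_le_div_sq (rigWeight_nonneg hp0 hp1) _ _ (by positivity)).trans ?_
  rw [mul_pow, mul_comm (ε ^ 2), ← div_div]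
  gcongr
  refine (div_le_div_of_nonneg_right (sum_rigWeight_mul_adjPairCount_sub_sq_le hp0 hp1 _)
    (by positivity)).trans ?_
  exact deviation_ratio_le (Nat.one_le_cast.2 (Nat.one_le_iff_ne_zero.2 hV))
    (Nat.cast_pos.2 (Nat.pos_of_ne_zero hα)) hp hN (edgeProb_nonneg hp0 hp1)
    (edgeProb_le hp0 hp1) (le_edgeProb hp0 hp1)

end Vertices

section RandomIntersectionGraph

variable {p : ℝ}

lemma bernoulliB_singleton (b : Bool) : bernoulliB p {b} = ENNReal.ofReal (bernWeight p b) := by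
  cases b <;> simp [bernoulliB, bernWeight]

instance : IsFiniteMeasure (bernoulliB p) := by
  constructor
  simp [bernoulliB, lt_top_iff_ne_top]

lemma rigMeasure_singleton {n m : ℕ} (hp0 : 0 ≤ p) (hp1 : p ≤ 1) (ω : Fin n → Fin m → Bool) :
    rigMeasure n m p {ω} = ENNReal.ofReal (rigWeight p ω) :=
  measure_pi_singleton_eq_ofReal_piWeight (piWeight_nonneg (bernWeight_nonneg hp0 hp1))
    (measure_pi_singleton_eq_ofReal_piWeight (bernWeight_nonneg hp0 hp1) bernoulliB_singleton) ω

lemma rigMeasure_apply {n m : ℕ} (hp0 : 0 ≤ p) (hp1 : p ≤ 1) (S : Set (Fin n → Fin m → Bool)) :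
    rigMeasure n m p S = ENNReal.ofReal (∑ ω ∈ S.toFinset, rigWeight p ω) := by
  rw [ENNReal.ofReal_sum_of_nonneg fun ω _ => rigWeight_nonneg hp0 hp1 ω]
  simp only [← rigMeasure_singleton hp0 hp1, sum_measure_singleton, Set.coe_toFinset]

lemma rigGraph_adj {n m : ℕ} (ω : Fin n → Fin m → Bool) (u v : Fin n) :
    (rigGraph ω).Adj u v ↔ u ≠ v ∧ ∃ i, ω u i = true ∧ ω v i = true := by
  simp only [rigGraph, SimpleGraph.fromRel_adj, and_comm (a := ω v _ = true), or_self]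

lemma two_mul_edgeCount_rigGraph {n m : ℕ} (ω : Fin n → Fin m → Bool) :
    2 * (edgeCount (rigGraph ω) : ℝ) = adjPairCount ω := by
  have hpair : ∀ P : Fin n × Fin n, (if (rigGraph ω).Adj P.1 P.2 then (1 : ℝ) else 0) =
      if P ∈ univ.offDiag then shareInd (ω P.1) (ω P.2) else 0 := by
    rintro ⟨u, v⟩
    by_cases huv : u = v <;> simp [huv, rigGraph_adj, shareInd]
  calc 2 * (edgeCount (rigGraph ω) : ℝ) = ∑ u, ((rigGraph ω).degree u : ℝ) := by
        rw [edgeCount, Set.ncard_eq_toFinset_card', ← SimpleGraph.edgeFinset]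
        exact_mod_cast (SimpleGraph.sum_degrees_eq_twice_card_edges _).symm
    _ = ∑ P : Fin n × Fin n, if (rigGraph ω).Adj P.1 P.2 then 1 else 0 := by
        rw [Fintype.sum_prod_type]
        refine sum_congr rfl fun u _ => ?_
        rw [← SimpleGraph.card_neighborFinset_eq_degree, SimpleGraph.neighborFinset_eq_filter,
          sum_boole]
    _ = adjPairCount ω := by
        simp only [hpair, sum_ite_mem, univ_inter, adjPairCount]

lemma rigMeasure_abs_two_mul_edgeCount_sub_le {n m : ℕ} (hp0 : 0 ≤ p) (hp1 : p ≤ 1)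
    (A δ : ℝ) :
    rigMeasure n m p {ω | |2 * (edgeCount (rigGraph ω) : ℝ) - A| ≤ δ} =
      ENNReal.ofReal (1 - ∑ ω ∈ univ.filter (fun ω : Fin n → Fin m → Bool =>
        δ < |adjPairCount ω - A|), rigWeight p ω) := by
  rw [rigMeasure_apply hp0 hp1]
  congr 1
  have hsplit := sum_filter_add_sum_filter_not univ (fun ω : Fin n → Fin m → Bool =>
    |adjPairCount ω - A| ≤ δ) (rigWeight p)
  rw [sum_rigWeight] at hsplit
  simp only [Set.toFinset_ofPred, two_mul_edgeCount_rigGraph, not_le] at hsplit ⊢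
  linarith

end RandomIntersectionGraph

lemma tendsto_natCast_mul_mul_atTop {m : ℕ → ℕ} {p : ℕ → ℝ} (hp : ∀ n, 0 ≤ p n)
    (h : Tendsto (fun n : ℕ => (n : ℝ) ^ 2 * (m n : ℝ) * p n ^ 2) atTop atTop) :
    Tendsto (fun n : ℕ => (n : ℝ) * m n * p n) atTop atTop := by
  refine tendsto_atTop_mono (fun n => ?_) (Real.tendsto_sqrt_atTop.comp h)
  have hm : (m n : ℝ) ≤ (m n : ℝ) ^ 2 := by
    rcases Nat.eq_zero_or_pos (m n) with h0 | h0
    · simp [h0]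
    · nlinarith [(Nat.one_le_cast (α := ℝ)).2 h0]
  calc Real.sqrt ((n : ℝ) ^ 2 * m n * p n ^ 2) ≤ Real.sqrt (((n : ℝ) * m n * p n) ^ 2) := by
        gcongr
        nlinarith [mul_nonneg (sq_nonneg (n : ℝ)) (sq_nonneg (p n))]
    _ = (n : ℝ) * m n * p n := Real.sqrt_sq (by have := hp n; positivity)

lemma tendsto_deviation_bound {m : ℕ → ℕ} {p : ℕ → ℝ} (hp : ∀ n, 0 ≤ p n)
    (h1 : Tendsto (fun n : ℕ => (m n : ℝ) * p n ^ 2) atTop (𝓝 0))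
    (h2 : Tendsto (fun n : ℕ => (n : ℝ) ^ 2 * (m n : ℝ) * p n ^ 2) atTop atTop) :
    Tendsto (fun n : ℕ => 2 / (n : ℝ) ^ 2 + ((m n : ℝ) * p n ^ 2) ^ 2 / 2 +
      2 / ((n : ℝ) ^ 2 * m n * p n ^ 2) + 4 / ((n : ℝ) * m n * p n) + 4 / (n : ℝ))
      atTop (𝓝 0) := by
  have hn := tendsto_natCast_atTop_atTop (R := ℝ)
  simpa using ((((tendsto_const_nhds.div_atTop ((tendsto_pow_atTop two_ne_zero).comp hn)).add
    ((h1.pow 2).div_const 2)).add (tendsto_const_nhds.div_atTop h2)).add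
    (tendsto_const_nhds.div_atTop (tendsto_natCast_mul_mul_atTop hp h2))).add
    (tendsto_const_nhds.div_atTop hn)

/-- Equation (Eq:eGconc): if `m p² = o(1)` and `n² m p² → ∞`, then
`2 e(G(n,m,p)) / (n² m p²) → 1` in probability. -/
theorem edge_count_concentration (m : ℕ → ℕ) (p : ℕ → ℝ)
    (hp : ∀ n, 0 ≤ p n ∧ p n ≤ 1)
    (h1 : Tendsto (fun n : ℕ => (m n : ℝ) * p n ^ 2) atTop (nhds 0))
    (h2 : Tendsto (fun n : ℕ => (n : ℝ) ^ 2 * (m n : ℝ) * p n ^ 2) atTop atTop) :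
    ∀ ε : ℝ, 0 < ε →
      Tendsto (fun n : ℕ => rigMeasure n (m n) (p n)
          {ω | |2 * (edgeCount (rigGraph ω) : ℝ) - (n : ℝ) ^ 2 * (m n : ℝ) * p n ^ 2| ≤
            ε * ((n : ℝ) ^ 2 * (m n : ℝ) * p n ^ 2)})
        atTop (nhds 1) := by
  intro ε hε
  have hfar : Tendsto (fun n : ℕ => ∑ ω ∈ univ.filter (fun ω : Fin n → Fin (m n) → Bool =>
      ε * ((n : ℝ) ^ 2 * (m n : ℝ) * p n ^ 2) <
        |adjPairCount ω - (n : ℝ) ^ 2 * (m n : ℝ) * p n ^ 2|), rigWeight (p n) ω)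
      atTop (𝓝 0) := by
    refine squeeze_zero' (Eventually.of_forall fun n => sum_nonneg fun ω _ =>
      rigWeight_nonneg (hp n).1 (hp n).2 ω) ?_
      (by simpa using (tendsto_deviation_bound (fun n => (hp n).1) h1 h2).div_const (ε ^ 2))
    filter_upwards [h2.eventually_gt_atTop 0] with n hA
    simpa only [Fintype.card_fin] using sum_rigWeight_filter_far_le (V := Fin n)
      (α := Fin (m n)) (hp n).1 (hp n).2 hε (by simpa only [Fintype.card_fin] using hA)
  simp only [rigMeasure_abs_two_mul_edgeCount_sub_le (hp _).1 (hp _).2]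
  simpa using ENNReal.tendsto_ofReal ((tendsto_const_nhds (x := (1 : ℝ))).sub hfar)

end RIG
end

section
/- Consider any intersection graph G on vertex set 𝒱 determined by assigned sets 𝒲(v) ⊆ {w_1,…,w_m} (distinct u,v adjacent iff 𝒲(u) ∩ 𝒲(v) ≠ ∅). For S ⊆ 𝒱 with complement S̄ let X_{i,S} = |𝒱(w_i) ∩ S| and V_i = |𝒱(w_i)|, and let E₁* = Σ over unordered pairs {u,v} of adjacent vertices of (|𝒲(u) ∩ 𝒲(v)| − 1). Then deterministically: (i) e(S) ≤ (1/2) Σ_{i=1}^m X_{i,S}(X_{i,S} − 1); (ii) e(S, S̄) ≥ Σ_{i=1}^m X_{i,S} X_{i,S̄} − E₁*; and (iii) vol(S) ≥ Σ_{i=1}^m X_{i,S}(V_i − 1) − 2 E₁*. -/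
open MeasureTheory Filter Topology
open scoped Classical

namespace RIG

variable {V : Type*}

/-- The intersection graph determined by attribute sets `W v ⊆ {w_1,…,w_m}`:
distinct `u, v` are adjacent iff `W u ∩ W v ≠ ∅`. -/
def interGraph {V : Type*} [DecidableEq V] {m : ℕ} (W : V → Finset (Fin m)) :
    SimpleGraph V :=
  SimpleGraph.fromRel fun u v => (W u ∩ W v).Nonempty

/-- `X_{i,S} = |𝒱(w_i) ∩ S|`, the number of vertices of `S` possessing attribute
`w_i`. -/
def Xcount {V : Type*} [DecidableEq V] {m : ℕ} (W : V → Finset (Fin m))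
    (i : Fin m) (S : Finset V) : ℕ :=
  (S.filter fun v => i ∈ W v).card

/-- `E₁* = Σ_{uv ∈ E} (|W(u) ∩ W(v)| - 1)`, summed over unordered pairs of adjacent
vertices. -/
noncomputable def E1star {V : Type*} [Fintype V] [DecidableEq V] {m : ℕ}
    (W : V → Finset (Fin m)) : ℕ :=
  ∑ e ∈ (interGraph W).edgeFinset,
    Sym2.lift ⟨fun u v => (W u ∩ W v).card - 1,
      fun u v => by simp only []; rw [Finset.inter_comm]⟩ e

/-!
Double counting the triples `(u, v, i)` with `u ∈ S`, `v ∈ T` and `w_i ∈ 𝒲(u) ∩ 𝒲(v)` gives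
`Σ_i X_{i,S} X_{i,T} = Σ_{(u,v) ∈ S × T} |𝒲(u) ∩ 𝒲(v)|`. The diagonal pairs contribute
`Σ_i X_{i,S∩T}`, and an off-diagonal pair contributes only if `uv` is an edge, in which case
it contributes `1 + (|𝒲(u) ∩ 𝒲(v)| - 1)`. So the sum is `Σ_i X_{i,S∩T}`, plus the number of
ordered adjacent pairs in `S × T`, plus an excess. For `T = S`, `S̄`, `𝒱` that number is
`2 e(S)`, `e(S, S̄)` and `vol(S)`. Each edge occurs at most twice among the ordered pairs, and at
most once when `T = S̄`, so the excess is at most `2 E₁*`, resp. `E₁*`.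
-/

open Finset SimpleGraph

section Graph

variable (G : SimpleGraph V)

lemma ncard_sep_edgeSet [Fintype G.edgeSet] (P : Sym2 V → Prop) [DecidablePred P] :
    {e ∈ G.edgeSet | P e}.ncard = #{e ∈ G.edgeFinset | P e} := by
  rw [← Set.ncard_coe_finset, coe_filter]
  simp only [mem_edgeFinset]

lemma card_interedges_univ [Fintype V] [DecidableRel G.Adj] (S : Finset V) :
    #(G.interedges S univ) = vol G S := by
  rw [vol, interedges_def, card_filter, sum_product]
  refine sum_congr rfl fun u _ => ?_
  rw [← card_neighborFinset_eq_degree, neighborFinset_eq_filter, card_filter]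
  -- the two sides differ only in their `Decidable` instances
  convert rfl

variable [Fintype V] [DecidableEq V] [DecidableRel G.Adj] [Fintype G.edgeSet]

lemma sum_interedges_univ_mk {M : Type*} [AddCommMonoid M] (g : Sym2 V → M) :
    ∑ p ∈ G.interedges univ univ, g s(p.1, p.2) = 2 • ∑ e ∈ G.edgeFinset, g e := by
  rw [← sum_fiberwise_of_maps_to (g := fun p : V × V => s(p.1, p.2)) (t := G.edgeFinset)
    (fun p hp => by simpa [mem_interedges_iff] using hp), smul_sum]
  refine sum_congr rfl fun e he => ?_
  induction e using Sym2.ind with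
  | _ u v =>
  have huv : G.Adj u v := by simpa using he
  have hfiber : {p ∈ G.interedges univ univ | s(p.1, p.2) = s(u, v)} = {(u, v), (v, u)} := by
    ext ⟨a, b⟩
    simp only [mem_filter, mem_interedges_iff, mem_univ, true_and, Sym2.eq_iff, mem_insert,
      mem_singleton, Prod.mk.injEq]
    constructor
    · rintro ⟨-, h⟩; exact h
    · rintro (⟨rfl, rfl⟩ | ⟨rfl, rfl⟩) <;> simp [huv, huv.symm]
  rw [sum_congr rfl fun p hp => congrArg g (mem_filter.1 hp).2, sum_const, hfiber,
    card_pair (by simp [huv.ne])]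

lemma card_interedges_self (S : Finset V) : #(G.interedges S S) = 2 * edgesIn G S := by
  have h := sum_interedges_univ_mk G fun e => if ∀ v ∈ e, v ∈ S then 1 else 0
  simp only [sum_boole, smul_eq_mul, Nat.cast_id] at h
  rw [edgesIn, ncard_sep_edgeSet, ← h]
  congr 1
  ext ⟨u, v⟩
  simp [mem_interedges_iff, and_comm, and_assoc]

lemma sum_interedges_compl_mk {M : Type*} [AddCommMonoid M] (S : Finset V) (g : Sym2 V → M) :
    ∑ p ∈ G.interedges S Sᶜ, g s(p.1, p.2) =
      ∑ e ∈ G.edgeFinset with (∃ v ∈ e, v ∈ S) ∧ ∃ v ∈ e, v ∉ S, g e := by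
  refine sum_bij (fun p _ => s(p.1, p.2)) ?_ ?_ ?_ (fun _ _ => rfl)
  · rintro ⟨u, v⟩ h
    rw [mem_interedges_iff] at h
    simp only [mem_filter, mem_edgeFinset, mem_edgeSet]
    exact ⟨h.2.2, ⟨u, Sym2.mem_mk_left u v, h.1⟩, ⟨v, Sym2.mem_mk_right u v, mem_compl.1 h.2.1⟩⟩
  · rintro ⟨a, b⟩ h ⟨c, d⟩ h' he
    simp only [mem_interedges_iff, mem_compl] at h h'
    rcases Sym2.eq_iff.1 he with ⟨rfl, rfl⟩ | ⟨rfl, rfl⟩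
    · rfl
    · exact absurd h.1 h'.2.1
  · intro e he
    induction e using Sym2.ind with
    | _ u v =>
    simp only [mem_filter, mem_edgeFinset, mem_edgeSet, Sym2.mem_iff] at he
    obtain ⟨huv, ⟨x, hx, hxS⟩, ⟨y, hy, hyS⟩⟩ := he
    rcases hx with rfl | rfl <;> rcases hy with rfl | rfl
    all_goals first
      | exact absurd hxS hyS
      | exact ⟨(x, y), by simp [mem_interedges_iff, *], rfl⟩
      | exact ⟨(x, y), by simp [mem_interedges_iff, huv.symm, *], Sym2.eq_swap⟩

lemma card_interedges_compl (S : Finset V) : #(G.interedges S Sᶜ) = crossEdges G S := by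
  rw [crossEdges, ncard_sep_edgeSet, card_eq_sum_ones, card_eq_sum_ones]
  exact sum_interedges_compl_mk G S fun _ => 1

end Graph

section IntersectionGraph

variable [DecidableEq V] {m : ℕ} (W : V → Finset (Fin m))

lemma interGraph_adj {u v : V} : (interGraph W).Adj u v ↔ u ≠ v ∧ (W u ∩ W v).Nonempty := by
  rw [interGraph, fromRel_adj, inter_comm (W v), or_self]

lemma sum_Xcount (A : Finset V) : ∑ i, Xcount W i A = ∑ u ∈ A, #(W u) := by
  simp only [Xcount, card_filter]
  rw [sum_comm]
  refine sum_congr rfl fun u _ => ?_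
  rw [← filter_univ_mem (W u), card_filter]
  simp

lemma sum_Xcount_mul_Xcount (S T : Finset V) :
    ∑ i, Xcount W i S * Xcount W i T = ∑ p ∈ S ×ˢ T, #(W p.1 ∩ W p.2) := by
  simp only [Xcount, card_filter, sum_mul_sum, sum_product]
  rw [sum_comm]
  refine sum_congr rfl fun u _ => ?_
  rw [sum_comm]
  refine sum_congr rfl fun v _ => ?_
  rw [← filter_univ_mem (W u ∩ W v), card_filter]
  refine sum_congr rfl fun i _ => ?_
  by_cases hu : i ∈ W u <;> by_cases hv : i ∈ W v <;> simp [hu, hv]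

lemma sum_product_card_inter (S T : Finset V) :
    ∑ p ∈ S ×ˢ T, #(W p.1 ∩ W p.2) =
      ∑ u ∈ S ∩ T, #(W u) + ∑ p ∈ (interGraph W).interedges S T, #(W p.1 ∩ W p.2) := by
  have hsplit (p : V × V) : #(W p.1 ∩ W p.2) =
      (if p.1 = p.2 then #(W p.1 ∩ W p.2) else 0) +
        if (interGraph W).Adj p.1 p.2 then #(W p.1 ∩ W p.2) else 0 := by
    by_cases hdiag : p.1 = p.2
    · simp [hdiag]
    · by_cases hW : (W p.1 ∩ W p.2).Nonempty
      · simp [hdiag, interGraph_adj, hW]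
      · simp [hdiag, interGraph_adj, not_nonempty_iff_eq_empty.1 hW]
  rw [sum_congr rfl fun p _ => hsplit p, sum_add_distrib, interedges_def, sum_filter]
  congr 1
  simp [sum_product, sum_ite_eq, sum_ite_mem]

def overlapExcess : Sym2 V → ℕ :=
  Sym2.lift ⟨fun u v => #(W u ∩ W v) - 1, fun u v => by dsimp only; rw [inter_comm]⟩

lemma card_inter_eq_one_add_overlapExcess {u v : V} (h : (interGraph W).Adj u v) :
    #(W u ∩ W v) = 1 + overlapExcess W s(u, v) := by
  have := card_pos.2 ((interGraph_adj W).1 h).2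
  simp only [overlapExcess, Sym2.lift_mk]
  omega

lemma sum_interedges_card_inter (S T : Finset V) :
    ∑ p ∈ (interGraph W).interedges S T, #(W p.1 ∩ W p.2) =
      #((interGraph W).interedges S T) +
        ∑ p ∈ (interGraph W).interedges S T, overlapExcess W s(p.1, p.2) := by
  rw [card_eq_sum_ones, ← sum_add_distrib]
  exact sum_congr rfl fun p hp =>
    card_inter_eq_one_add_overlapExcess W ((interGraph W).mem_interedges_iff.1 hp).2.2

lemma sum_Xcount_mul_Xcount_eq (S T : Finset V) :
    ∑ i, Xcount W i S * Xcount W i T =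
      ∑ i, Xcount W i (S ∩ T) + #((interGraph W).interedges S T) +
        ∑ p ∈ (interGraph W).interedges S T, overlapExcess W s(p.1, p.2) := by
  rw [sum_Xcount_mul_Xcount, sum_product_card_inter, sum_Xcount, sum_interedges_card_inter,
    add_assoc]

variable [Fintype V]

lemma E1star_eq_sum_overlapExcess :
    E1star W = ∑ e ∈ (interGraph W).edgeFinset, overlapExcess W e := rfl

lemma sum_interedges_overlapExcess_le (S T : Finset V) :
    ∑ p ∈ (interGraph W).interedges S T, overlapExcess W s(p.1, p.2) ≤ 2 * E1star W :=
  calc _ ≤ ∑ p ∈ (interGraph W).interedges univ univ, overlapExcess W s(p.1, p.2) :=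
        sum_le_sum_of_subset ((interGraph W).interedges_mono (subset_univ S) (subset_univ T))
    _ = 2 * E1star W := by rw [E1star_eq_sum_overlapExcess, sum_interedges_univ_mk, smul_eq_mul]

lemma sum_interedges_compl_overlapExcess_le (S : Finset V) :
    ∑ p ∈ (interGraph W).interedges S Sᶜ, overlapExcess W s(p.1, p.2) ≤ E1star W := by
  rw [sum_interedges_compl_mk, E1star_eq_sum_overlapExcess]
  exact sum_le_sum_of_subset (filter_subset _ _)

lemma two_mul_edgesIn_add_sum_Xcount_le (S : Finset V) :
    2 * edgesIn (interGraph W) S + ∑ i, Xcount W i S ≤ ∑ i, Xcount W i S * Xcount W i S := by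
  rw [sum_Xcount_mul_Xcount_eq, inter_self, ← card_interedges_self]
  omega

lemma sum_Xcount_mul_Xcount_compl_le (S : Finset V) :
    ∑ i, Xcount W i S * Xcount W i Sᶜ ≤ crossEdges (interGraph W) S + E1star W := by
  have := sum_interedges_compl_overlapExcess_le W S
  rw [sum_Xcount_mul_Xcount_eq, inter_compl, ← card_interedges_compl]
  simp only [Xcount, filter_empty, card_empty, sum_const_zero, zero_add]
  omega

lemma sum_Xcount_mul_Xcount_univ_le (S : Finset V) :
    ∑ i, Xcount W i S * Xcount W i univ ≤
      ∑ i, Xcount W i S + vol (interGraph W) S + 2 * E1star W := by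
  have := sum_interedges_overlapExcess_le W S univ
  rw [sum_Xcount_mul_Xcount_eq, inter_univ, ← card_interedges_univ]
  omega

end IntersectionGraph

/-- Equations (Eq:DefeS), (Eq:DefeSbarS) and (Eq:DefVolume): deterministically, for
any intersection graph and any `S ⊆ 𝒱` with complement `S̄`:
(i) `e(S) ≤ (1/2) Σ_i X_{i,S}(X_{i,S} - 1)`;
(ii) `e(S,S̄) ≥ Σ_i X_{i,S} X_{i,S̄} - E₁*`;
(iii) `vol(S) ≥ Σ_i X_{i,S}(V_i - 1) - 2 E₁*`. -/
theorem intersection_graph_edge_counts {V : Type*} [Fintype V] [DecidableEq V]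
    {m : ℕ} (W : V → Finset (Fin m)) (S : Finset V) :
    (edgesIn (interGraph W) S : ℝ) ≤
        (1 / 2) * ∑ i : Fin m, (Xcount W i S : ℝ) * ((Xcount W i S : ℝ) - 1) ∧
    (∑ i : Fin m, (Xcount W i S : ℝ) * (Xcount W i Sᶜ : ℝ)) - (E1star W : ℝ) ≤
        (crossEdges (interGraph W) S : ℝ) ∧
    (∑ i : Fin m, (Xcount W i S : ℝ) * ((Xcount W i Finset.univ : ℝ) - 1)) -
        2 * (E1star W : ℝ) ≤ (vol (interGraph W) S : ℝ) := by
  have h₁ : ((2 * edgesIn (interGraph W) S + ∑ i, Xcount W i S : ℕ) : ℝ) ≤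
      (∑ i, Xcount W i S * Xcount W i S : ℕ) := by
    exact_mod_cast two_mul_edgesIn_add_sum_Xcount_le W S
  have h₂ : ((∑ i, Xcount W i S * Xcount W i Sᶜ : ℕ) : ℝ) ≤
      (crossEdges (interGraph W) S + E1star W : ℕ) := by
    exact_mod_cast sum_Xcount_mul_Xcount_compl_le W S
  have h₃ : ((∑ i, Xcount W i S * Xcount W i univ : ℕ) : ℝ) ≤
      (∑ i, Xcount W i S + vol (interGraph W) S + 2 * E1star W : ℕ) := by
    exact_mod_cast sum_Xcount_mul_Xcount_univ_le W S
  push_cast at h₁ h₂ h₃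
  simp only [mul_sub, mul_one, sum_sub_distrib]
  refine ⟨?_, ?_, ?_⟩ <;> linarith

end RIG
end

section
/- Let X be a binomial random variable with parameters s and p, let l and A be integers with 1 ≤ l ≤ A ≤ s, and write (X)_l = X(X−1)⋯(X−l+1) for the falling factorial. Then E[ (X)_l · 1_{X > A} ] ≤ Σ_{k=A}^{s} k^l (e s p / k)^k. Moreover, if additionally e s p < 1 and A ≥ 2l, then E[ (X)_l · 1_{X > A} ] ≤ A^l (e s p / A)^A · 1/(1 − e s p). -/
/-!
Bounding `(k)_l ≤ k^l`, `(1 - p)^(s-k) ≤ 1` and `C(s, k) ≤ s^k / k! ≤ (e s / k)^k` (as `k^k / k! ≤ e^k`)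
dominates the `k`-th term of the expectation by `k^l (e s p / k)^k`. Writing this as
`(e s p)^k / k^(k-l)` shows that, once `k ≥ l`, the terms decay at least geometrically with ratio
`e s p`, which gives the second bound.

`X` is not assumed measurable, so the expectation is bounded through the `ℝ≥0∞`-valued Lebesgue
integral, replacing each level set `{X = k}` by a measurable hull of the same measure.
-/

open MeasureTheory Filter Topology

lemma lintegral_comp_le_tsum {Ω α : Type*} [MeasurableSpace Ω] [Countable α]
    (μ : Measure Ω) (X : Ω → α) (φ : α → ENNReal) :
    ∫⁻ a, φ (X a) ∂μ ≤ ∑' n, φ n * μ (X ⁻¹' {n}) := by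
  calc ∫⁻ a, φ (X a) ∂μ
      ≤ ∫⁻ a, ∑' n, (toMeasurable μ (X ⁻¹' {n})).indicator (fun _ ↦ φ n) a ∂μ := by
        refine lintegral_mono fun a ↦ ?_
        refine le_trans (le_of_eq ?_) (ENNReal.le_tsum (X a))
        rw [Set.indicator_of_mem (subset_toMeasurable μ (X ⁻¹' {X a}) rfl)]
    _ = ∑' n, φ n * μ (X ⁻¹' {n}) := by
        rw [lintegral_tsum fun n ↦ (measurable_const.indicator
          (measurableSet_toMeasurable μ _)).aemeasurable]
        simp_rw [lintegral_indicator_const (measurableSet_toMeasurable μ _), measure_toMeasurable]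

lemma integral_le_of_lintegral_ofReal_le {Ω : Type*} [MeasurableSpace Ω] {μ : Measure Ω}
    {f : Ω → ℝ} {B : ℝ} (hf : 0 ≤ᵐ[μ] f) (hB : 0 ≤ B)
    (h : ∫⁻ a, ENNReal.ofReal (f a) ∂μ ≤ ENNReal.ofReal B) : ∫ a, f a ∂μ ≤ B := by
  by_cases hfi : Integrable f μ
  · rwa [← ofReal_integral_eq_lintegral_ofReal hfi hf, ENNReal.ofReal_le_ofReal_iff hB] at h
  · rwa [integral_undef hfi]

lemma integral_comp_le_sum {Ω : Type*} [MeasurableSpace Ω] (μ : Measure Ω) (X : Ω → ℕ)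
    {g q : ℕ → ℝ} (hg : 0 ≤ g) (hq : 0 ≤ q) (hX : ∀ n, μ (X ⁻¹' {n}) = ENNReal.ofReal (q n))
    (S : Finset ℕ) (hS : ∀ n ∉ S, g n * q n = 0) :
    ∫ a, g (X a) ∂μ ≤ ∑ n ∈ S, g n * q n := by
  refine integral_le_of_lintegral_ofReal_le (.of_forall fun a ↦ hg _)
    (S.sum_nonneg fun n _ ↦ mul_nonneg (hg n) (hq n)) ?_
  calc ∫⁻ a, ENNReal.ofReal (g (X a)) ∂μ
      ≤ ∑' n, ENNReal.ofReal (g n) * μ (X ⁻¹' {n}) := lintegral_comp_le_tsum μ X _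
    _ = ∑ n ∈ S, ENNReal.ofReal (g n * q n) := by
        simp_rw [hX, ← ENNReal.ofReal_mul (hg _)]
        exact tsum_eq_sum fun n hn ↦ by rw [hS n hn, ENNReal.ofReal_zero]
    _ = ENNReal.ofReal (∑ n ∈ S, g n * q n) :=
        (ENNReal.ofReal_sum_of_nonneg fun n _ ↦ mul_nonneg (hg n) (hq n)).symm

lemma choose_le_exp_mul_div_pow (s k : ℕ) :
    (s.choose k : ℝ) ≤ (Real.exp 1 * s / k) ^ k := by
  rcases k.eq_zero_or_pos with rfl | hk
  · simp
  have hk' : (0 : ℝ) < k := by exact_mod_cast hk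
  calc (s.choose k : ℝ) ≤ (s : ℝ) ^ k / k.factorial := Nat.choose_le_pow_div k s
    _ = (s / k : ℝ) ^ k * ((k : ℝ) ^ k / k.factorial) := by rw [div_pow]; field_simp
    _ ≤ (s / k : ℝ) ^ k * Real.exp k := by
        gcongr; exact Real.pow_div_factorial_le_exp (k : ℝ) hk'.le k
    _ = (Real.exp 1 * s / k) ^ k := by rw [← Real.exp_one_pow]; ring

lemma descFactorial_mul_binomial_le (s k l : ℕ) {p : ℝ} (hp0 : 0 ≤ p) (hp1 : p ≤ 1) :
    (k.descFactorial l : ℝ) * ((s.choose k : ℝ) * p ^ k * (1 - p) ^ (s - k)) ≤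
      (k : ℝ) ^ l * (Real.exp 1 * s * p / k) ^ k := by
  have hq : (1 - p) ^ (s - k) ≤ 1 := pow_le_one₀ (by linarith) (by linarith)
  calc (k.descFactorial l : ℝ) * ((s.choose k : ℝ) * p ^ k * (1 - p) ^ (s - k))
      ≤ (k : ℝ) ^ l * ((Real.exp 1 * s / k) ^ k * p ^ k * 1) := by
        gcongr
        · exact_mod_cast Nat.descFactorial_le_pow k l
        · exact choose_le_exp_mul_div_pow s k
    _ = (k : ℝ) ^ l * (Real.exp 1 * s * p / k) ^ k := by rw [mul_one, ← mul_pow]; ring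

lemma pow_mul_div_pow_eq_div {k l : ℕ} (r : ℝ) (h : l ≤ k) :
    (k : ℝ) ^ l * (r / k) ^ k = r ^ k / (k : ℝ) ^ (k - l) := by
  obtain ⟨m, rfl⟩ := Nat.exists_eq_add_of_le h
  rcases (l + m).eq_zero_or_pos with h0 | hpos
  · obtain ⟨rfl, rfl⟩ : l = 0 ∧ m = 0 := by omega
    simp
  have : ((l + m : ℕ) : ℝ) ≠ 0 := by positivity
  rw [Nat.add_sub_cancel_left, div_pow, pow_add _ l m]
  field_simp
  ring

lemma pow_mul_div_pow_succ_le {k l : ℕ} {r : ℝ} (hr : 0 ≤ r) (h : l ≤ k) :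
    ((k + 1 : ℕ) : ℝ) ^ l * (r / (k + 1 : ℕ)) ^ (k + 1) ≤ r * ((k : ℝ) ^ l * (r / k) ^ k) := by
  have hpos : (0 : ℝ) < (k : ℝ) ^ (k - l) := by
    rcases k.eq_zero_or_pos with rfl | hk
    · simp
    · positivity
  rw [pow_mul_div_pow_eq_div r h, pow_mul_div_pow_eq_div r (by omega), mul_div_assoc', ← pow_succ']
  refine div_le_div_of_nonneg_left (pow_nonneg hr _) hpos ?_
  push_cast
  calc (k : ℝ) ^ (k - l) ≤ ((k : ℝ) + 1) ^ (k - l) := by gcongr; linarith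
    _ ≤ ((k : ℝ) + 1) ^ (k + 1 - l) := pow_le_pow_right₀ (by linarith) (by omega)

lemma sum_Icc_le_geometric {t : ℕ → ℝ} {r : ℝ} (hr0 : 0 ≤ r) (hr1 : r < 1) (A s : ℕ)
    (ht0 : 0 ≤ t A) (ht : ∀ k, A ≤ k → t (k + 1) ≤ r * t k) :
    ∑ k ∈ Finset.Icc A s, t k ≤ t A * (1 / (1 - r)) := by
  have hdecay (j : ℕ) : t (A + j) ≤ r ^ j * t A :=
    le_geom (u := fun j ↦ t (A + j)) hr0 j fun k _ ↦ ht (A + k) (by omega)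
  rw [← Finset.Ico_add_one_right_eq_Icc, Finset.sum_Ico_eq_sum_range]
  calc ∑ j ∈ Finset.range (s + 1 - A), t (A + j)
      ≤ ∑ j ∈ Finset.range (s + 1 - A), t A * r ^ j :=
        Finset.sum_le_sum fun j _ ↦ (hdecay j).trans_eq (mul_comm _ _)
    _ = t A * ∑ j ∈ Finset.Ico 0 (s + 1 - A), r ^ j := by rw [Finset.mul_sum, Finset.range_eq_Ico]
    _ ≤ t A * (1 / (1 - r)) := by
        gcongr
        simpa using geom_sum_Ico_le_of_lt_one hr0 hr1 (m := 0) (n := s + 1 - A)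

theorem binomial_falling_factorial_tail_general {Ω : Type*} [MeasurableSpace Ω]
    (μ : Measure Ω) (X : Ω → ℕ) (s : ℕ) (p : ℝ)
    (hp0 : 0 ≤ p) (hp1 : p ≤ 1)
    (hX : ∀ k : ℕ, μ {a | X a = k} =
      ENNReal.ofReal ((s.choose k : ℝ) * p ^ k * (1 - p) ^ (s - k)))
    (l A : ℕ) (hlA : l ≤ A) :
    (∫ a, (if A < X a then ((X a).descFactorial l : ℝ) else 0) ∂μ) ≤
        ∑ k ∈ Finset.Icc A s, (k : ℝ) ^ l * (Real.exp 1 * (s : ℝ) * p / (k : ℝ)) ^ k ∧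
    (Real.exp 1 * (s : ℝ) * p < 1 → 2 * l ≤ A →
      (∫ a, (if A < X a then ((X a).descFactorial l : ℝ) else 0) ∂μ) ≤
        (A : ℝ) ^ l * (Real.exp 1 * (s : ℝ) * p / (A : ℝ)) ^ A *
          (1 / (1 - Real.exp 1 * (s : ℝ) * p))) := by
  have hr0 : 0 ≤ Real.exp 1 * s * p := by positivity
  have hbinom : 0 ≤ fun k ↦ (s.choose k : ℝ) * p ^ k * (1 - p) ^ (s - k) := fun k ↦ by
    have : 0 ≤ 1 - p := by linarith
    positivity
  have hfalling : 0 ≤ fun n : ℕ ↦ if A < n then (n.descFactorial l : ℝ) else 0 := fun n ↦ by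
    dsimp only; split_ifs <;> positivity
  have hvanish (n : ℕ) (hn : n ∉ Finset.Icc A s) :
      (if A < n then (n.descFactorial l : ℝ) else 0) *
        ((s.choose n : ℝ) * p ^ n * (1 - p) ^ (s - n)) = 0 := by
    rcases not_and_or.mp (Finset.mem_Icc.not.mp hn) with hnA | hsn
    · rw [if_neg (by omega), zero_mul]
    · rw [Nat.choose_eq_zero_of_lt (by omega)]; simp
  have htail := (integral_comp_le_sum μ X hfalling hbinom hX _ hvanish).trans <|
    Finset.sum_le_sum fun k _ ↦ (mul_le_mul_of_nonneg_right (by split_ifs <;> simp)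
      (hbinom k)).trans (descFactorial_mul_binomial_le s k l hp0 hp1)
  refine ⟨htail, fun hr1 _ ↦ htail.trans ?_⟩
  exact sum_Icc_le_geometric hr0 hr1 A s (by positivity)
    fun k hk ↦ pow_mul_div_pow_succ_le hr0 (hlA.trans hk)

/-- Equation (Eq:XiTildeExpectedValue): if `X ~ Bin(s,p)`, `1 ≤ l ≤ A ≤ s`, then
`E[(X)_l 1_{X>A}] ≤ Σ_{k=A}^{s} k^l (e s p / k)^k`; moreover, if `e s p < 1` and
`A ≥ 2l`, then `E[(X)_l 1_{X>A}] ≤ A^l (e s p / A)^A · 1/(1 - e s p)`. -/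
theorem binomial_falling_factorial_tail {Ω : Type*} [MeasurableSpace Ω]
    (μ : Measure Ω) [IsProbabilityMeasure μ] (X : Ω → ℕ) (s : ℕ) (p : ℝ)
    (hp0 : 0 ≤ p) (hp1 : p ≤ 1)
    (hX : ∀ k : ℕ, μ {a | X a = k} =
      ENNReal.ofReal ((s.choose k : ℝ) * p ^ k * (1 - p) ^ (s - k)))
    (l A : ℕ) (hl : 1 ≤ l) (hlA : l ≤ A) (hAs : A ≤ s) :
    (∫ a, (if A < X a then ((X a).descFactorial l : ℝ) else 0) ∂μ) ≤
        ∑ k ∈ Finset.Icc A s, (k : ℝ) ^ l * (Real.exp 1 * (s : ℝ) * p / (k : ℝ)) ^ k ∧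
    (Real.exp 1 * (s : ℝ) * p < 1 → 2 * l ≤ A →
      (∫ a, (if A < X a then ((X a).descFactorial l : ℝ) else 0) ∂μ) ≤
        (A : ℝ) ^ l * (Real.exp 1 * (s : ℝ) * p / (A : ℝ)) ^ A *
          (1 / (1 - Real.exp 1 * (s : ℝ) * p))) :=
  binomial_falling_factorial_tail_general μ X s p hp0 hp1 hX l A hlA
end

section
/- For every integer n ≥ 2 and every real p ∈ (0,1), one has C(n,2) p² − ( 1 − (1−p)^n − n p (1−p)^{n−1} ) ≤ (n p)³ / 2, where C(n,2) = n(n−1)/2. Consequently, in the coupling in which Ĝ(n,m,p) ⊆ G(n,m,p) (for each attribute w_i with |𝒱(w_i)| ≥ 2 one uniformly random pair of vertices of 𝒱(w_i) is joined in Ĝ), the expected difference Δ of edge counts satisfies E[Δ] = E[e(G(n,m,p))] − E[e(Ĝ(n,m,p))] ≤ m (n p)³ / 2. -/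
/-
Every edge of `G(n,m,p)` lies in the clique spanned by some `𝒱(w_i)`, and `Ĝ(n,m,p)`
contains at least one edge of that clique as soon as `|𝒱(w_i)| ≥ 2`. Hence `Δ` is at most the sum
over attributes of `C(|𝒱(w_i)|, 2) - 1[|𝒱(w_i)| ≥ 2]`, whose expectation is
`f(n) = C(n,2) p² - P(Bin(n,p) ≥ 2)`. Finally `f(n+1) - f(n) = n p² (1 - (1-p)^(n-1)) ≤ n(n-1) p³`
by Bernoulli's inequality, so `f(n) ≤ n(n-1)(n-2) p³ / 3 ≤ (np)³ / 2`.
-/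

open MeasureTheory Filter Topology
open scoped Classical

namespace RIG

variable {V : Type*}

instance {n : ℕ} : MeasurableSpace (Equiv.Perm (Fin n)) := ⊤

/-- Auxiliary randomness: for each attribute an independent uniformly random
permutation of the vertices, together with the attribute assignment of
`G(n,m,p)`. -/
noncomputable def hatMeasure (n m : ℕ) (p : ℝ) :
    Measure ((Fin n → Fin m → Bool) × (Fin m → Equiv.Perm (Fin n))) :=
  (rigMeasure n m p).prod
    (Measure.pi fun _ => (PMF.uniformOfFintype (Equiv.Perm (Fin n))).toMeasure)

/-- The graph `Ĝ(n,m,p)` of the coupling `Ĝ(n,m,p) ⊆ G(n,m,p)`: for each attribute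
`w_i` with `|𝒱(w_i)| ≥ 2`, the two vertices of `𝒱(w_i)` coming first in the
uniformly random order attached to `w_i` — i.e. a uniformly random pair of distinct
vertices of `𝒱(w_i)` — are joined by an edge. -/
def hatGraph {n m : ℕ}
    (x : (Fin n → Fin m → Bool) × (Fin m → Equiv.Perm (Fin n))) :
    SimpleGraph (Fin n) :=
  SimpleGraph.fromRel fun u v => ∃ i : Fin m,
    x.1 u i = true ∧ x.1 v i = true ∧
      ∀ w : Fin n, x.1 w i = true → w = u ∨ w = v ∨
        (x.2 i u < x.2 i w ∧ x.2 i v < x.2 i w)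

open Finset

theorem choose_two_mul_sq_sub_le (p : ℝ) (hp : p ≤ 2) : ∀ n : ℕ,
    (n : ℝ) * ((n : ℝ) - 1) / 2 * p ^ 2 - (1 - (1 - p) ^ n - (n : ℝ) * p * (1 - p) ^ (n - 1)) ≤
      (n : ℝ) * ((n : ℝ) - 1) * ((n : ℝ) - 2) / 3 * p ^ 3
  | 0 => by simp
  | 1 => by norm_num
  | n + 2 => by
    have ih := choose_two_mul_sq_sub_le p hp (n + 1)
    have bernoulli : 1 - n * p ≤ (1 - p) ^ n := by
      simpa [sub_eq_add_neg] using one_add_mul_le_pow (a := -p) (by linarith) n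
    have increment :=
      mul_le_mul_of_nonneg_left bernoulli (by positivity : (0 : ℝ) ≤ (n + 1) * p ^ 2)
    rw [show n + 2 - 1 = n + 1 from rfl]
    rw [show n + 1 - 1 = n from rfl] at ih
    push_cast at ih ⊢
    -- the left side increases by `(n + 1) p² (1 - (1 - p) ^ n)` from `n + 1` to `n + 2`
    linear_combination ih + increment

theorem choose_two_mul_sq_sub_le_cube (n : ℕ) {p : ℝ} (hp0 : 0 ≤ p) (hp : p ≤ 2) :
    (n : ℝ) * ((n : ℝ) - 1) / 2 * p ^ 2 - (1 - (1 - p) ^ n - (n : ℝ) * p * (1 - p) ^ (n - 1)) ≤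
      ((n : ℝ) * p) ^ 3 / 2 := by
  refine (choose_two_mul_sq_sub_le p hp n).trans ?_
  have hn : (n : ℝ) * ((n : ℝ) - 1) * ((n : ℝ) - 2) / 3 ≤ (n : ℝ) ^ 3 / 2 := by
    rcases n.eq_zero_or_pos with rfl | hn
    · simp
    · have h1 : (0 : ℝ) ≤ n - 1 := by
        rw [sub_nonneg]; exact_mod_cast hn
      nlinarith [mul_nonneg (Nat.cast_nonneg n : (0 : ℝ) ≤ n) (sq_nonneg ((n : ℝ) - 1)),
        mul_nonneg (Nat.cast_nonneg n : (0 : ℝ) ≤ n) h1]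
  calc (n : ℝ) * ((n : ℝ) - 1) * ((n : ℝ) - 2) / 3 * p ^ 3
      ≤ (n : ℝ) ^ 3 / 2 * p ^ 3 := by gcongr
    _ = ((n : ℝ) * p) ^ 3 / 2 := by ring

theorem card_le_card_add_sum_card_sdiff {α ι : Type*} [DecidableEq α] {A B : Finset α}
    {s : Finset ι} {C : ι → Finset α} (h : A ⊆ s.biUnion C) :
    #A ≤ #B + ∑ i ∈ s, #(C i \ B) :=
  calc #A ≤ #(B ∪ s.biUnion fun i => C i \ B) := card_le_card fun a ha => by
          by_cases hb : a ∈ B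
          · exact mem_union_left _ hb
          · obtain ⟨i, hi, hai⟩ := mem_biUnion.1 (h ha)
            exact mem_union_right _ (mem_biUnion.2 ⟨i, hi, mem_sdiff.2 ⟨hai, hb⟩⟩)
    _ ≤ #B + #(s.biUnion fun i => C i \ B) := card_union_le _ _
    _ ≤ #B + ∑ i ∈ s, #(C i \ B) := by gcongr; exact card_biUnion_le

section Graph

variable [Fintype V]

-- For the column `b = (x.1 · i)` of an attribute assignment, `trueSet b` is `𝒱(w_i)` and
-- `pairsWithin b` is the set of edges of the clique that `w_i` spans in `G(n,m,p)`.
noncomputable def trueSet (b : V → Bool) : Finset V := {v | b v = true}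

noncomputable def pairsWithin (b : V → Bool) : Finset (Sym2 V) :=
  {e ∈ (⊤ : SimpleGraph V).edgeFinset | ∀ v ∈ e, b v = true}

theorem edgeCount_eq_card_edgeFinset (G : SimpleGraph V) : edgeCount G = #G.edgeFinset := by
  rw [edgeCount, Set.ncard_eq_toFinset_card', SimpleGraph.edgeFinset]

end Graph

section Coupling

variable {n m : ℕ}

theorem edgeFinset_rigGraph_subset (ω : Fin n → Fin m → Bool) :
    (rigGraph ω).edgeFinset ⊆ univ.biUnion fun i => pairsWithin (ω · i) := by
  intro e he
  rw [SimpleGraph.mem_edgeFinset] at he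
  induction e using Sym2.ind with | h u v => ?_
  rw [SimpleGraph.mem_edgeSet, rigGraph, SimpleGraph.fromRel_adj] at he
  obtain ⟨huv, ⟨i, hu, hv⟩ | ⟨i, hv, hu⟩⟩ := he <;>
    exact mem_biUnion.2 ⟨i, mem_univ _, by simp [pairsWithin, huv, hu, hv]⟩

theorem exists_mem_pairsWithin_edgeSet_hatGraph
    (x : (Fin n → Fin m → Bool) × (Fin m → Equiv.Perm (Fin n))) (i : Fin m)
    (h : 2 ≤ #(trueSet (x.1 · i))) :
    ∃ e ∈ pairsWithin (x.1 · i), e ∈ (hatGraph x).edgeSet := by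
  set S := trueSet (x.1 · i)
  -- the two vertices of `𝒱(w_i)` that come first in the order `x.2 i`
  obtain ⟨a, haS, ha⟩ := S.exists_min_image (x.2 i) (card_pos.1 (by omega))
  obtain ⟨b, hbS, hb⟩ := (S.erase a).exists_min_image (x.2 i)
    (card_pos.1 (by rw [card_erase_of_mem haS]; omega))
  have hba := ne_of_mem_erase hbS
  have hmem : ∀ {w}, w ∈ S ↔ x.1 w i = true := by simp [S, trueSet]
  refine ⟨s(a, b), ?_, ?_⟩
  · simp [pairsWithin, hba.symm, hmem.1 haS, hmem.1 (mem_of_mem_erase hbS)]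
  · refine ⟨hba.symm, Or.inl ⟨i, hmem.1 haS, hmem.1 (mem_of_mem_erase hbS), fun w hw => ?_⟩⟩
    by_cases hwa : w = a
    · exact .inl hwa
    by_cases hwb : w = b
    · exact .inr (.inl hwb)
    have hwS := hmem.2 hw
    exact .inr (.inr ⟨(ha w hwS).lt_of_ne ((x.2 i).injective.ne (Ne.symm hwa)),
      (hb w (mem_erase.2 ⟨hwa, hwS⟩)).lt_of_ne ((x.2 i).injective.ne (Ne.symm hwb))⟩)

theorem card_pairsWithin_sdiff_edgeFinset_hatGraph_le
    (x : (Fin n → Fin m → Bool) × (Fin m → Equiv.Perm (Fin n))) (i : Fin m) :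
    (#(pairsWithin (x.1 · i) \ (hatGraph x).edgeFinset) : ℝ) ≤
      #(pairsWithin (x.1 · i)) - if 2 ≤ #(trueSet (x.1 · i)) then 1 else 0 := by
  set P := pairsWithin (x.1 · i)
  set E := (hatGraph x).edgeFinset
  split_ifs with h
  · obtain ⟨e, he, heE⟩ := exists_mem_pairsWithin_edgeSet_hatGraph x i h
    have hinter : 1 ≤ #(P ∩ E) := card_pos.2 ⟨e, mem_inter.2 ⟨he, by simpa [E] using heE⟩⟩
    have hP := card_sdiff_add_card_inter P E
    have : ((#(P \ E) + 1 : ℕ) : ℝ) ≤ #P := by exact_mod_cast (by omega : #(P \ E) + 1 ≤ #P)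
    push_cast at this
    linarith
  · simpa using card_le_card sdiff_subset

theorem edgeCount_rigGraph_sub_edgeCount_hatGraph_le
    (x : (Fin n → Fin m → Bool) × (Fin m → Equiv.Perm (Fin n))) :
    (edgeCount (rigGraph x.1) : ℝ) - edgeCount (hatGraph x) ≤
      ∑ i, ((#(pairsWithin (x.1 · i)) : ℝ) - if 2 ≤ #(trueSet (x.1 · i)) then 1 else 0) := by
  have h := card_le_card_add_sum_card_sdiff (B := (hatGraph x).edgeFinset)
    (edgeFinset_rigGraph_subset x.1)
  rw [edgeCount_eq_card_edgeFinset, edgeCount_eq_card_edgeFinset, sub_le_iff_le_add']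
  calc (#(rigGraph x.1).edgeFinset : ℝ)
      ≤ #(hatGraph x).edgeFinset +
          ∑ i, (#(pairsWithin (x.1 · i) \ (hatGraph x).edgeFinset) : ℝ) := by
        exact_mod_cast h
    _ ≤ _ := by gcongr with i; exact card_pairsWithin_sdiff_edgeFinset_hatGraph_le x i

end Coupling

section Bernoulli

variable {p : ℝ}

theorem isProbabilityMeasure_bernoulliB (hp0 : 0 ≤ p) (hp1 : p ≤ 1) :
    IsProbabilityMeasure (bernoulliB p) := by
  constructor
  simp [bernoulliB, ← ENNReal.ofReal_add hp0 (sub_nonneg.2 hp1)]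

theorem integral_bernoulliB (hp0 : 0 ≤ p) (hp1 : p ≤ 1) (g : Bool → ℝ) :
    ∫ b, g b ∂bernoulliB p = p * g true + (1 - p) * g false := by
  have (c : ℝ) (b : Bool) : Integrable g (ENNReal.ofReal c • Measure.dirac b) :=
    Integrable.of_finite.smul_measure ENNReal.ofReal_ne_top
  rw [bernoulliB, integral_add_measure (this _ _) (this _ _), integral_smul_measure,
    integral_smul_measure, integral_dirac, integral_dirac, ENNReal.toReal_ofReal hp0,
    ENNReal.toReal_ofReal (sub_nonneg.2 hp1), smul_eq_mul, smul_eq_mul]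

variable [Fintype V]

theorem integral_pi_bernoulliB_prod (hp0 : 0 ≤ p) (hp1 : p ≤ 1) (g : V → Bool → ℝ) :
    ∫ b, ∏ v, g v (b v) ∂Measure.pi (fun _ => bernoulliB p) =
      ∏ v, (p * g v true + (1 - p) * g v false) := by
  have := isProbabilityMeasure_bernoulliB hp0 hp1
  rw [integral_fintype_prod_eq_prod]
  simp only [integral_bernoulliB hp0 hp1]

theorem integral_card_pairsWithin (hp0 : 0 ≤ p) (hp1 : p ≤ 1) :
    ∫ b, (#(pairsWithin b) : ℝ) ∂Measure.pi (fun _ : V => bernoulliB p) =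
      (Fintype.card V).choose 2 * p ^ 2 := by
  have := isProbabilityMeasure_bernoulliB hp0 hp1
  have hcard (b : V → Bool) : (#(pairsWithin b) : ℝ) =
      ∑ e ∈ (⊤ : SimpleGraph V).edgeFinset, ∏ v, if v ∈ e → b v = true then (1 : ℝ) else 0 := by
    simp only [pairsWithin, card_filter, prod_boole]
    push_cast
    simp only [mem_univ, true_implies]
  have hedge (e : Sym2 V) (he : e ∈ (⊤ : SimpleGraph V).edgeFinset) :
      ∫ b, (∏ v, if v ∈ e → b v = true then (1 : ℝ) else 0)
        ∂Measure.pi (fun _ : V => bernoulliB p) = p ^ 2 := by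
    refine (integral_pi_bernoulliB_prod hp0 hp1
      fun v c => if v ∈ e → c = true then 1 else 0).trans ?_
    calc _ = ∏ v, if v ∈ e.toFinset then p else 1 :=
          prod_congr rfl fun v _ => by by_cases hv : v ∈ e <;> simp [hv]
      _ = p ^ 2 := by
        rw [Fintype.prod_ite_mem, prod_const,
          Sym2.card_toFinset_of_not_isDiag _ (SimpleGraph.not_isDiag_of_mem_edgeFinset he)]
  simp only [hcard]
  rw [integral_finsetSum _ fun e _ => Integrable.of_finite, sum_congr rfl hedge, sum_const,
    SimpleGraph.card_edgeFinset_top_eq_card_choose_two, nsmul_eq_mul]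

theorem ite_two_le_card (s : Finset V) :
    (if 2 ≤ #s then 1 else 0 : ℝ) =
      1 - (if s = ∅ then 1 else 0) - ∑ v, if s = {v} then 1 else 0 := by
  obtain h | h | h : #s = 0 ∨ #s = 1 ∨ 2 ≤ #s := by omega
  · rw [card_eq_zero] at h
    subst h
    simp [eq_comm (a := (∅ : Finset V))]
  · obtain ⟨a, rfl⟩ := card_eq_one.1 h
    simp
  · have hne : s ≠ ∅ := by rintro rfl; simp at h
    have hns (v : V) : s ≠ {v} := by rintro rfl; simp at h
    simp [h, hne, hns]

theorem integral_two_le_card_trueSet (hp0 : 0 ≤ p) (hp1 : p ≤ 1) :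
    ∫ b, (if 2 ≤ #(trueSet b) then 1 else 0 : ℝ) ∂Measure.pi (fun _ : V => bernoulliB p) =
      1 - (1 - p) ^ Fintype.card V - Fintype.card V * p * (1 - p) ^ (Fintype.card V - 1) := by
  have := isProbabilityMeasure_bernoulliB hp0 hp1
  have hempty (b : V → Bool) : (if trueSet b = ∅ then 1 else 0 : ℝ) =
      ∏ v, if b v = false then 1 else 0 := by
    simp [prod_boole, trueSet, filter_eq_empty_iff]
  have hsingleton (b : V → Bool) (v : V) : (if trueSet b = {v} then 1 else 0 : ℝ) =
      ∏ w, if (b w = true ↔ w = v) then 1 else 0 := by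
    simp [prod_boole, trueSet, Finset.ext_iff]
  simp only [ite_two_le_card, hempty, hsingleton]
  rw [integral_sub .of_finite .of_finite, integral_sub .of_finite .of_finite,
    integral_finsetSum _ fun v _ => .of_finite]
  have hnone : ∫ b, (∏ v, if b v = false then 1 else 0 : ℝ)
      ∂Measure.pi (fun _ : V => bernoulliB p) = (1 - p) ^ Fintype.card V :=
    (integral_pi_bernoulliB_prod hp0 hp1 fun _ c => if c = false then 1 else 0).trans (by simp)
  have hone (v : V) : ∫ b, (∏ w, if (b w = true ↔ w = v) then 1 else 0 : ℝ)
      ∂Measure.pi (fun _ : V => bernoulliB p) = p * (1 - p) ^ (Fintype.card V - 1) := by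
    refine (integral_pi_bernoulliB_prod hp0 hp1
      fun w c => if (c = true ↔ w = v) then 1 else 0).trans ?_
    calc _ = ∏ w, if w = v then p else 1 - p :=
          prod_congr rfl fun w _ => by by_cases h : w = v <;> simp [h]
      _ = _ := by
        rw [← mul_prod_erase univ _ (mem_univ v), if_pos rfl,
          prod_congr rfl fun w hw => if_neg (ne_of_mem_erase hw), prod_const,
          card_erase_of_mem (mem_univ v), card_univ]
  rw [hnone, sum_congr rfl fun v _ => hone v]
  simp only [integral_const, probReal_univ, smul_eq_mul, mul_one, sum_const, card_univ,
    nsmul_eq_mul]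
  ring

end Bernoulli

instance {n : ℕ} : MeasurableSingletonClass (Equiv.Perm (Fin n)) :=
  ⟨fun _ => MeasurableSpace.measurableSet_top⟩

theorem isProbabilityMeasure_hatMeasure (n m : ℕ) {p : ℝ} (hp0 : 0 ≤ p) (hp1 : p ≤ 1) :
    IsProbabilityMeasure (hatMeasure n m p) := by
  have := isProbabilityMeasure_bernoulliB hp0 hp1
  unfold hatMeasure rigMeasure
  infer_instance

theorem map_column_hatMeasure (n : ℕ) {m : ℕ} {p : ℝ} (hp0 : 0 ≤ p) (hp1 : p ≤ 1) (i : Fin m) :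
    (hatMeasure n m p).map (fun x v => x.1 v i) = Measure.pi fun _ => bernoulliB p := by
  have := isProbabilityMeasure_bernoulliB hp0 hp1
  have hfst : (hatMeasure n m p).map Prod.fst = rigMeasure n m p := by
    simp [hatMeasure]
  change ((hatMeasure n m p).map ((fun ω v => ω v i) ∘ Prod.fst)) = _
  have hcol := Measure.pi_map_pi (μ := fun _ : Fin n => Measure.pi fun _ : Fin m => bernoulliB p)
    (f := fun _ ω => ω i) (fun _ => (measurable_pi_apply i).aemeasurable)
  rw [← Measure.map_map (by fun_prop) measurable_fst, hfst, rigMeasure, hcol]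
  simp only [(measurePreserving_eval _ i).map_eq]

theorem integral_hatMeasure_column {n m : ℕ} {p : ℝ} (hp0 : 0 ≤ p) (hp1 : p ≤ 1) (i : Fin m)
    (F : (Fin n → Bool) → ℝ) :
    ∫ x, F (x.1 · i) ∂hatMeasure n m p = ∫ b, F b ∂Measure.pi fun _ => bernoulliB p := by
  rw [← map_column_hatMeasure n hp0 hp1 i,
    integral_map (by fun_prop) .of_discrete]

/-- For every `n ≥ 2` and `p ∈ (0,1)`,
`C(n,2) p² - (1 - (1-p)^n - n p (1-p)^{n-1}) ≤ (np)³/2`; consequently, in the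
coupling `Ĝ(n,m,p) ⊆ G(n,m,p)`, the expected difference of the edge counts
satisfies `E Δ = E e(G(n,m,p)) - E e(Ĝ(n,m,p)) ≤ m (np)³ / 2`. -/
theorem expected_edge_difference :
    (∀ (n : ℕ), 2 ≤ n → ∀ p : ℝ, 0 < p → p < 1 →
      (n : ℝ) * ((n : ℝ) - 1) / 2 * p ^ 2 -
          (1 - (1 - p) ^ n - (n : ℝ) * p * (1 - p) ^ (n - 1)) ≤
        ((n : ℝ) * p) ^ 3 / 2) ∧
    ∀ (n m : ℕ), 2 ≤ n → ∀ p : ℝ, 0 < p → p < 1 →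
      (∫ x, (edgeCount (rigGraph x.1) : ℝ) ∂(hatMeasure n m p)) -
          (∫ x, (edgeCount (hatGraph x) : ℝ) ∂(hatMeasure n m p)) ≤
        (m : ℝ) * ((n : ℝ) * p) ^ 3 / 2 := by
  refine ⟨fun n _ p hp0 hp1 => choose_two_mul_sq_sub_le_cube n hp0.le (by linarith), ?_⟩
  intro n m _ p hp0 hp1
  have := isProbabilityMeasure_hatMeasure n m hp0.le hp1.le
  have := isProbabilityMeasure_bernoulliB hp0.le hp1.le
  have hattr (i : Fin m) : ∫ x, ((#(pairsWithin (x.1 · i)) : ℝ) -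
      if 2 ≤ #(trueSet (x.1 · i)) then 1 else 0) ∂hatMeasure n m p =
        (n : ℝ) * ((n : ℝ) - 1) / 2 * p ^ 2 -
          (1 - (1 - p) ^ n - (n : ℝ) * p * (1 - p) ^ (n - 1)) := by
    rw [integral_hatMeasure_column hp0.le hp1.le i
        fun b => (#(pairsWithin b) : ℝ) - if 2 ≤ #(trueSet b) then 1 else 0,
      integral_sub .of_finite .of_finite, integral_card_pairsWithin hp0.le hp1.le,
      integral_two_le_card_trueSet hp0.le hp1.le, Fintype.card_fin, Nat.cast_choose_two]
  calc (∫ x, (edgeCount (rigGraph x.1) : ℝ) ∂hatMeasure n m p) -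
        ∫ x, (edgeCount (hatGraph x) : ℝ) ∂hatMeasure n m p
      = ∫ x, ((edgeCount (rigGraph x.1) : ℝ) - edgeCount (hatGraph x)) ∂hatMeasure n m p :=
        (integral_sub .of_finite .of_finite).symm
    _ ≤ ∫ x, ∑ i, ((#(pairsWithin (x.1 · i)) : ℝ) - if 2 ≤ #(trueSet (x.1 · i)) then 1 else 0)
          ∂hatMeasure n m p :=
        integral_mono .of_finite .of_finite edgeCount_rigGraph_sub_edgeCount_hatGraph_le
    _ = m * ((n : ℝ) * ((n : ℝ) - 1) / 2 * p ^ 2 -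
          (1 - (1 - p) ^ n - (n : ℝ) * p * (1 - p) ^ (n - 1))) := by
        rw [integral_finsetSum _ fun i _ => .of_finite, sum_congr rfl fun i _ => hattr i,
          sum_const, card_univ, Fintype.card_fin, nsmul_eq_mul]
    _ ≤ m * (((n : ℝ) * p) ^ 3 / 2) := by
        gcongr; exact choose_two_mul_sq_sub_le_cube n hp0.le (by linarith)
    _ = m * ((n : ℝ) * p) ^ 3 / 2 := by ring

end RIG
end

section
/- Suppose m = m_n and p = p_n satisfy n = o(m) and n p / ln(m/n) → ∞ as n → ∞, and set ε = ε_n = √( 6 ln( (3/4)·(m/n) ) / (n p) ) and δ = (8/3)·(n/m). For S ⊆ 𝒱 let M_S = |{ i ∈ [m] : | |𝒱(w_i) ∩ S| − |S| p | ≥ ε |S| p }|. Then the probability that there exists a set S ⊆ 𝒱 with |S| ≥ n/2 and M_S ≥ 2 δ m tends to 0 as n → ∞; in fact for each fixed such S this probability is at most e^{−n}. -/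
open MeasureTheory Filter Topology
open scoped Classical

namespace RIG

variable {V : Type*}

/-- `ε_n = √( 6 ln((3/4)(m/n)) / (np) )`. -/
noncomputable def epsn (m : ℕ → ℕ) (p : ℕ → ℝ) (n : ℕ) : ℝ :=
  Real.sqrt (6 * Real.log (3 / 4 * ((m n : ℝ) / (n : ℝ))) / ((n : ℝ) * p n))

/-- `δ = (8/3)(n/m)`. -/
noncomputable def deltan (m : ℕ → ℕ) (n : ℕ) : ℝ :=
  8 / 3 * ((n : ℝ) / (m n : ℝ))

/-- `X_{i,S} = |𝒱(w_i) ∩ S|`. -/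
def XS {n m : ℕ} (ω : Fin n → Fin m → Bool) (i : Fin m) (S : Finset (Fin n)) : ℕ :=
  (S.filter fun v => ω v i = true).card

/-- `M_S = |{ i ∈ [m] : | X_{i,S} - |S| p | ≥ ε |S| p }|`. -/
noncomputable def MS {n m : ℕ} (ω : Fin n → Fin m → Bool) (S : Finset (Fin n))
    (ε q : ℝ) : ℕ :=
  (Finset.univ.filter fun i : Fin m =>
    ε * ((S.card : ℝ) * q) ≤ |(XS ω i S : ℝ) - (S.card : ℝ) * q|).card

/-!
For a fixed attribute `w_i`, `X_{i,S} = |𝒱(w_i) ∩ S|` is a sum of `|S|` independent Bernoulli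
variables, so its moment generating function is at most `exp (|S| p (eᵗ - 1))`, and the Chernoff
bound together with `eˣ ≤ 1 + x + 3x²/5` for `|x| ≤ 9/20` gives
`q := P(|X_{i,S} - |S|p| ≥ ε|S|p) ≤ 2 exp(-(2/5) ε² |S| p)`. With `ε² |S| p ≥ 3 ln((3/4)(m/n))`
and `ln((3/4)(m/n)) ≥ 10` this is at most `2 e⁻² (4/3)(n/m)`. Transposing the attribute
assignment preserves the product law, so the columns `ω · i` are independent and
`P(M_S ≥ k) ≤ C(m,k) qᵏ ≤ (e m q / k)ᵏ ≤ e⁻ᵏ` for `k = ⌈2δm⌉ ≥ 16n/3`.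
A union bound over the `2ⁿ` sets `S` leaves `(2/e)ⁿ → 0`.
-/

open ProbabilityTheory Finset

section ProductMeasure

variable {ι κ α : Type*} [Fintype ι] [Fintype κ] [MeasurableSpace α]

lemma map_swap_pi_pi [Countable α] [MeasurableSingletonClass α] (ν : Measure α) [SigmaFinite ν] :
    (Measure.pi fun _ : ι => Measure.pi fun _ : κ => ν).map Function.swap
      = Measure.pi fun _ : κ => Measure.pi fun _ : ι => ν := by
  refine Measure.ext_of_singleton fun η => ?_
  have hswap : Function.swap ⁻¹' {η} = {Function.swap η} := by
    ext ω
    simp only [Set.mem_preimage, Set.mem_singleton_iff]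
    exact ⟨fun h => h ▸ rfl, fun h => h ▸ rfl⟩
  rw [Measure.map_apply (measurable_of_countable _) (measurableSet_singleton _), hswap]
  simp only [Measure.pi_singleton]
  exact prod_comm

lemma pi_card_filter_mem_ge_le (μ : Measure α) [IsProbabilityMeasure μ] (A : Set α) (k : ℕ) :
    Measure.pi (fun _ : ι => μ) {x | k ≤ #{i | x i ∈ A}}
      ≤ (Fintype.card ι).choose k * μ A ^ k := by
  have hcover : {x : ι → α | k ≤ #{i | x i ∈ A}}
      ⊆ ⋃ T ∈ powersetCard k (univ : Finset ι), (T : Set ι).pi fun _ => A := by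
    intro x hx
    obtain ⟨T, hT, hTcard⟩ := exists_subset_card_eq hx
    exact Set.mem_biUnion (mem_powersetCard.mpr ⟨subset_univ T, hTcard⟩)
      fun i hi => (mem_filter.mp (hT hi)).2
  calc _ ≤ ∑ T ∈ powersetCard k (univ : Finset ι),
          Measure.pi (fun _ : ι => μ) ((T : Set ι).pi fun _ => A) :=
        (measure_mono hcover).trans (measure_biUnion_finset_le _ _)
    _ = (Fintype.card ι).choose k * μ A ^ k := by
        rw [sum_congr rfl fun T hT => by
          rw [Measure.pi_pi_finset, prod_const, (mem_powersetCard.mp hT).2],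
          sum_const, card_powersetCard, card_univ, nsmul_eq_mul]

end ProductMeasure

lemma pow_div_exp_one_le_factorial (k : ℕ) : ((k : ℝ) / Real.exp 1) ^ k ≤ k.factorial := by
  have h := Real.pow_div_factorial_le_exp (k : ℝ) (Nat.cast_nonneg k) k
  rw [div_le_iff₀ (by positivity), ← Real.exp_one_pow] at h
  rw [div_pow, div_le_iff₀ (by positivity)]
  linarith

lemma choose_mul_pow_le (m k : ℕ) {q : ℝ} (hq : 0 ≤ q) :
    (m.choose k : ℝ) * q ^ k ≤ (Real.exp 1 * m * q / k) ^ k := by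
  have hchoose : (m.choose k : ℝ) ≤ (m : ℝ) ^ k / ((k : ℝ) / Real.exp 1) ^ k := by
    rcases k.eq_zero_or_pos with rfl | hk
    · simp
    exact (Nat.choose_le_pow_div k m).trans
      (div_le_div_of_nonneg_left (by positivity) (by positivity) (pow_div_exp_one_le_factorial k))
  calc (m.choose k : ℝ) * q ^ k ≤ (m : ℝ) ^ k / ((k : ℝ) / Real.exp 1) ^ k * q ^ k := by gcongr
    _ = (Real.exp 1 * m * q / k) ^ k := by
        rw [← div_pow, ← mul_pow, div_div_eq_mul_div]
        ring

lemma pi_card_filter_mem_ge_le_exp_neg {ι α : Type*} [Fintype ι] [MeasurableSpace α]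
    (μ : Measure α) [IsProbabilityMeasure μ] (A : Set α) {k : ℕ} (hk : 0 < k)
    (hA : Real.exp 1 * Fintype.card ι * μ.real A ≤ k * Real.exp (-1)) :
    Measure.pi (fun _ : ι => μ) {x | k ≤ #{i | x i ∈ A}} ≤ ENNReal.ofReal (Real.exp (-k)) := by
  have hbase : Real.exp 1 * Fintype.card ι * μ.real A / k ≤ Real.exp (-1) := by
    rwa [div_le_iff₀ (by exact_mod_cast hk), mul_comm (Real.exp (-1))]
  refine (pi_card_filter_mem_ge_le μ A k).trans ?_
  rw [← ofReal_measureReal, ← ENNReal.ofReal_pow measureReal_nonneg, ← ENNReal.ofReal_natCast,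
    ← ENNReal.ofReal_mul (by positivity)]
  refine ENNReal.ofReal_le_ofReal ?_
  calc _ ≤ (Real.exp 1 * Fintype.card ι * μ.real A / k) ^ k :=
        choose_mul_pow_le _ k measureReal_nonneg
    _ ≤ Real.exp (-1) ^ k := by gcongr
    _ = Real.exp (-k) := by rw [← Real.exp_nat_mul]; ring_nf

lemma exp_le_one_add_add_mul_sq {x : ℝ} (hx : |x| ≤ 9 / 20) :
    Real.exp x ≤ 1 + x + 3 / 5 * x ^ 2 := by
  have h := Real.exp_bound (hx.trans (by norm_num)) (n := 3) (by norm_num)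
  norm_num [sum_range_succ, Nat.factorial] at h
  have hcube : |x| ^ 3 = x ^ 2 * |x| := by rw [pow_succ, sq_abs]
  nlinarith [(abs_le.mp h).2, abs_nonneg x, sq_nonneg x]

section Chernoff

variable {Ω : Type*} [MeasurableSpace Ω] {μ : Measure Ω} [IsFiniteMeasure μ] {X : Ω → ℝ}
  {a ε : ℝ}

lemma measureReal_abs_sub_ge_le_of_mgf_le (ha : 0 ≤ a) (hε : 0 ≤ ε) (hε' : ε ≤ 9 / 20)
    (hint : ∀ t, Integrable (fun ω => Real.exp (t * X ω)) μ)
    (hmgf : ∀ t, mgf X μ t ≤ Real.exp (a * (Real.exp t - 1))) :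
    μ.real {ω | ε * a ≤ |X ω - a|} ≤ 2 * Real.exp (-(2 / 5 * ε ^ 2 * a)) := by
  have hεabs : |ε| ≤ 9 / 20 := by rwa [abs_of_nonneg hε]
  have hupper : μ.real {ω | (1 + ε) * a ≤ X ω} ≤ Real.exp (-(2 / 5 * ε ^ 2 * a)) := by
    refine (measure_ge_le_exp_mul_mgf _ hε (hint ε)).trans ?_
    calc _ ≤ Real.exp (-ε * ((1 + ε) * a)) * Real.exp (a * (Real.exp ε - 1)) := by
          gcongr; exact hmgf ε
      _ = Real.exp (a * (Real.exp ε - 1 - ε - ε ^ 2)) := by rw [← Real.exp_add]; ring_nf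
      _ ≤ _ := by
          gcongr
          nlinarith [exp_le_one_add_add_mul_sq hεabs]
  have hlower : μ.real {ω | X ω ≤ (1 - ε) * a} ≤ Real.exp (-(2 / 5 * ε ^ 2 * a)) := by
    refine (measure_le_le_exp_mul_mgf _ (neg_nonpos.mpr hε) (hint (-ε))).trans ?_
    calc _ ≤ Real.exp (-(-ε) * ((1 - ε) * a)) * Real.exp (a * (Real.exp (-ε) - 1)) := by
          gcongr; exact hmgf (-ε)
      _ = Real.exp (a * (Real.exp (-ε) - 1 + ε - ε ^ 2)) := by rw [← Real.exp_add]; ring_nf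
      _ ≤ _ := by
          gcongr
          nlinarith [exp_le_one_add_add_mul_sq (x := -ε) (by rwa [abs_neg])]
  have hsplit : {ω | ε * a ≤ |X ω - a|} ⊆ {ω | (1 + ε) * a ≤ X ω} ∪ {ω | X ω ≤ (1 - ε) * a} := by
    intro ω (hω : ε * a ≤ |X ω - a|)
    rcases le_abs'.mp hω with h | h
    exacts [Or.inr (show X ω ≤ (1 - ε) * a by linarith),
      Or.inl (show (1 + ε) * a ≤ X ω by linarith)]
  calc _ ≤ μ.real ({ω | (1 + ε) * a ≤ X ω} ∪ {ω | X ω ≤ (1 - ε) * a}) := measureReal_mono hsplit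
    _ ≤ _ := (measureReal_union_le _ _).trans (by linarith)

end Chernoff

section Bernoulli

variable {p : ℝ}

lemma isProbabilityMeasure_bernoulliB_s18 (h0 : 0 ≤ p) (h1 : p ≤ 1) :
    IsProbabilityMeasure (bernoulliB p) := by
  constructor
  simp only [bernoulliB, Measure.add_apply, Measure.smul_apply, measure_univ, smul_eq_mul,
    mul_one, ← ENNReal.ofReal_add h0 (sub_nonneg.mpr h1), add_sub_cancel, ENNReal.ofReal_one]

lemma mgf_boolIndicator_bernoulliB (h0 : 0 ≤ p) (h1 : p ≤ 1) (t : ℝ) :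
    mgf (fun b : Bool => if b then (1 : ℝ) else 0) (bernoulliB p) t
      = p * Real.exp t + (1 - p) := by
  rw [bernoulliB, mgf_add_measure (Integrable.of_finite.smul_measure ENNReal.ofReal_ne_top)
    (Integrable.of_finite.smul_measure ENNReal.ofReal_ne_top), mgf_smul_measure, mgf_smul_measure,
    mgf_dirac', mgf_dirac', ENNReal.toReal_ofReal h0, ENNReal.toReal_ofReal (sub_nonneg.mpr h1)]
  simp

variable {ι : Type*} [Fintype ι]

lemma mgf_card_filter_pi_bernoulliB (h0 : 0 ≤ p) (h1 : p ≤ 1) (S : Finset ι) (t : ℝ) :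
    mgf (fun x : ι → Bool => (#{v ∈ S | x v = true} : ℝ)) (Measure.pi fun _ => bernoulliB p) t
      = (p * Real.exp t + (1 - p)) ^ #S := by
  have := isProbabilityMeasure_bernoulliB_s18 h0 h1
  have hsum : (fun x : ι → Bool => (#{v ∈ S | x v = true} : ℝ))
      = ∑ v ∈ S, fun x : ι → Bool => if x v then (1 : ℝ) else 0 := by
    ext x
    simp [Finset.sum_apply]
  have hindep : iIndepFun (fun v (x : ι → Bool) => if x v then (1 : ℝ) else 0)
      (Measure.pi fun _ => bernoulliB p) :=
    iIndepFun_pi (X := fun _ (b : Bool) => if b then (1 : ℝ) else 0)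
      fun _ => (measurable_of_countable _).aemeasurable
  rw [hsum, hindep.mgf_sum (fun _ => measurable_of_countable _), ← prod_const]
  refine prod_congr rfl fun v _ => ?_
  rw [← mgf_boolIndicator_bernoulliB h0 h1]
  exact integral_comp_eval (μ := fun _ : ι => bernoulliB p) (i := v)
    (f := fun b : Bool => Real.exp (t * if b then (1 : ℝ) else 0))
    (measurable_of_countable _).aestronglyMeasurable

lemma mgf_card_filter_pi_bernoulliB_le (h0 : 0 ≤ p) (h1 : p ≤ 1) (S : Finset ι) (t : ℝ) :
    mgf (fun x : ι → Bool => (#{v ∈ S | x v = true} : ℝ)) (Measure.pi fun _ => bernoulliB p) t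
      ≤ Real.exp (#S * p * (Real.exp t - 1)) := by
  rw [mgf_card_filter_pi_bernoulliB h0 h1, mul_assoc, Real.exp_nat_mul]
  have hexp := Real.add_one_le_exp (p * (Real.exp t - 1))
  gcongr
  nlinarith [Real.exp_pos t]

end Bernoulli

lemma map_swap_rigMeasure (n m : ℕ) {p : ℝ} (h0 : 0 ≤ p) (h1 : p ≤ 1) :
    (rigMeasure n m p).map Function.swap
      = Measure.pi fun _ : Fin m => Measure.pi fun _ : Fin n => bernoulliB p :=
  have := isProbabilityMeasure_bernoulliB_s18 h0 h1
  map_swap_pi_pi _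

lemma rigMeasure_MS_ge_le_exp_neg {n m : ℕ} {p ε : ℝ} (h0 : 0 ≤ p) (h1 : p ≤ 1) (hε : 0 ≤ ε)
    (hε' : ε ≤ 9 / 20) (S : Finset (Fin n)) {k : ℕ} (hk : 0 < k)
    (hkm : Real.exp 1 * m * (2 * Real.exp (-(2 / 5 * ε ^ 2 * (#S * p)))) ≤ k * Real.exp (-1)) :
    rigMeasure n m p {ω | k ≤ MS ω S ε p} ≤ ENNReal.ofReal (Real.exp (-k)) := by
  have := isProbabilityMeasure_bernoulliB_s18 h0 h1
  set A : Set (Fin n → Bool) :=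
    {x | ε * (#S * p) ≤ |(#{v ∈ S | x v = true} : ℝ) - #S * p|}
  have htail : (Measure.pi fun _ : Fin n => bernoulliB p).real A
      ≤ 2 * Real.exp (-(2 / 5 * ε ^ 2 * (#S * p))) :=
    measureReal_abs_sub_ge_le_of_mgf_le (by positivity) hε hε' (fun _ => .of_finite)
      (mgf_card_filter_pi_bernoulliB_le h0 h1 S)
  have hpreimage : {ω : Fin n → Fin m → Bool | k ≤ MS ω S ε p}
      = Function.swap ⁻¹' {η | k ≤ #{i | η i ∈ A}} := rfl
  rw [hpreimage, ← Measure.map_apply (measurable_of_countable _) (Set.to_countable _).measurableSet,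
    map_swap_rigMeasure n m h0 h1]
  refine pi_card_filter_mem_ge_le_exp_neg _ A hk (le_trans ?_ hkm)
  rw [Fintype.card_fin]
  gcongr

section Parameters

lemma cast_pos_of_log_pos {a b : ℕ} (h : 0 < Real.log (3 / 4 * ((a : ℝ) / b))) :
    0 < (a : ℝ) ∧ 0 < (b : ℝ) := by
  have hr := (Real.log_pos_iff (by positivity)).mp h
  -- `b = 0` is excluded too, because of the junk value `a / 0 = 0`.
  exact ⟨Nat.cast_pos.mpr (Nat.pos_of_ne_zero fun h => by norm_num [h] at hr),
    Nat.cast_pos.mpr (Nat.pos_of_ne_zero fun h => by norm_num [h] at hr)⟩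

variable {m : ℕ → ℕ} {p : ℕ → ℝ} {n : ℕ}

lemma two_mul_deltan_mul (hm : (m n : ℝ) ≠ 0) : 2 * deltan m n * m n = 16 / 3 * n := by
  rw [deltan]
  field_simp
  ring

lemma sq_epsn (hL : 0 ≤ Real.log (3 / 4 * (m n / n))) (hnp : 0 ≤ n * p n) :
    epsn m p n ^ 2 = 6 * Real.log (3 / 4 * (m n / n)) / (n * p n) :=
  Real.sq_sqrt (by positivity)

lemma epsn_le (hL : 0 < Real.log (3 / 4 * (m n / n)))
    (hnp : 30 * Real.log (3 / 4 * (m n / n)) ≤ n * p n) : epsn m p n ≤ 9 / 20 := by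
  rw [epsn, Real.sqrt_le_left (by norm_num), div_le_iff₀ (by linarith)]
  linarith

lemma exp_one_mul_mul_chernoff_bound_le (hL : 10 ≤ Real.log (3 / 4 * (m n / n)))
    (hnp : 30 * Real.log (3 / 4 * (m n / n)) ≤ n * p n) (S : Finset (Fin n)) (hS : n ≤ 2 * #S) :
    Real.exp 1 * m n * (2 * Real.exp (-(2 / 5 * epsn m p n ^ 2 * (#S * p n))))
      ≤ 16 / 3 * n * Real.exp (-1) := by
  set L := Real.log (3 / 4 * (m n / n)) with hLdef
  obtain ⟨hm, hn⟩ := cast_pos_of_log_pos (a := m n) (b := n) (by linarith)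
  have hexpL : Real.exp (-L) = 4 / 3 * (n / m n) := by
    rw [Real.exp_neg, hLdef, Real.exp_log (by positivity)]
    field_simp
  have hexponent : 6 / 5 * L ≤ 2 / 5 * epsn m p n ^ 2 * (#S * p n) := by
    have hScard : (n : ℝ) ≤ 2 * #S := by exact_mod_cast hS
    have hp : 0 < p n := pos_of_mul_pos_right (by linarith) hn.le
    rw [sq_epsn (by linarith) (by positivity), ← hLdef]
    field_simp
    nlinarith
  calc Real.exp 1 * m n * (2 * Real.exp (-(2 / 5 * epsn m p n ^ 2 * (#S * p n))))
      ≤ Real.exp 1 * m n * (2 * (Real.exp (-L) * Real.exp (-2))) := by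
        rw [← Real.exp_add]
        gcongr
        linarith
    _ = 8 / 3 * n * Real.exp (-1) := by
        rw [hexpL, show (-1 : ℝ) = 1 + -2 by norm_num, Real.exp_add]
        field_simp
        ring
    _ ≤ 16 / 3 * n * Real.exp (-1) := by gcongr; norm_num

end Parameters

lemma rigMeasure_two_mul_deltan_le_MS_le {m : ℕ → ℕ} {p : ℕ → ℝ} {n : ℕ} (hp : p n ≤ 1)
    (hL : 10 ≤ Real.log (3 / 4 * (m n / n)))
    (hnp : 30 * Real.log (3 / 4 * (m n / n)) ≤ n * p n) (S : Finset (Fin n)) (hS : n ≤ 2 * #S) :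
    rigMeasure n (m n) (p n) {ω | 2 * deltan m n * m n ≤ (MS ω S (epsn m p n) (p n) : ℝ)}
      ≤ ENNReal.ofReal (Real.exp (-n)) := by
  obtain ⟨hm, hn⟩ := cast_pos_of_log_pos (a := m n) (b := n) (by linarith)
  have hp0 : 0 ≤ p n := (pos_of_mul_pos_right (by linarith) hn.le).le
  set k := ⌈2 * deltan m n * (m n : ℝ)⌉₊
  have hset : {ω : Fin n → Fin (m n) → Bool |
      2 * deltan m n * m n ≤ (MS ω S (epsn m p n) (p n) : ℝ)}
      = {ω | k ≤ MS ω S (epsn m p n) (p n)} := by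
    ext ω
    exact (Nat.ceil_le (a := 2 * deltan m n * (m n : ℝ))).symm
  have hkn : 16 / 3 * (n : ℝ) ≤ k := two_mul_deltan_mul hm.ne' ▸ Nat.le_ceil _
  have hnk : (n : ℝ) ≤ k := by linarith
  rw [hset]
  calc _ ≤ ENNReal.ofReal (Real.exp (-k)) :=
        rigMeasure_MS_ge_le_exp_neg hp0 hp (Real.sqrt_nonneg _) (epsn_le (by linarith) hnp) S
          (Nat.cast_pos.mp (hn.trans_le hnk))
          ((exp_one_mul_mul_chernoff_bound_le hL hnp S hS).trans (by gcongr))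
    _ ≤ ENNReal.ofReal (Real.exp (-n)) := by gcongr

lemma measure_setOf_exists_le {Ω ι : Type*} [MeasurableSpace Ω] [Fintype ι] (μ : Measure Ω)
    (P : ι → Prop) (Q : ι → Ω → Prop) {c : ENNReal} (h : ∀ i, P i → μ {ω | Q i ω} ≤ c) :
    μ {ω | ∃ i, P i ∧ Q i ω} ≤ Fintype.card ι * c := by
  classical
  calc μ {ω | ∃ i, P i ∧ Q i ω} ≤ μ (⋃ i ∈ ({i | P i} : Finset ι), {ω | Q i ω}) :=
        measure_mono fun ω ⟨i, hi, hq⟩ => Set.mem_biUnion (by simpa using hi) hq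
    _ ≤ ∑ i ∈ ({i | P i} : Finset ι), μ {ω | Q i ω} := measure_biUnion_finset_le _ _
    _ ≤ ∑ i ∈ ({i | P i} : Finset ι), c := sum_le_sum fun i hi => h i (by simpa using hi)
    _ ≤ Fintype.card ι * c := by
        rw [sum_const, nsmul_eq_mul]
        gcongr
        exact card_le_univ _

lemma tendsto_two_pow_mul_ofReal_exp_neg :
    Tendsto (fun n : ℕ => (2 : ENNReal) ^ n * ENNReal.ofReal (Real.exp (-n))) atTop (𝓝 0) := by
  have hrewrite : ∀ n : ℕ, (2 : ENNReal) ^ n * ENNReal.ofReal (Real.exp (-n))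
      = ENNReal.ofReal ((2 * Real.exp (-1)) ^ n) := by
    intro n
    rw [mul_pow, ← Real.exp_nat_mul, ENNReal.ofReal_mul (by positivity),
      ENNReal.ofReal_pow zero_le_two]
    simp
  have hbase : 2 * Real.exp (-1) < 1 := by
    rw [Real.exp_neg, ← div_eq_mul_inv, div_lt_one (Real.exp_pos 1)]
    linarith [Real.add_one_lt_exp one_ne_zero]
  simp_rw [hrewrite]
  rw [← ENNReal.ofReal_zero]
  exact ENNReal.tendsto_ofReal (tendsto_pow_atTop_nhds_zero_of_lt_one (by positivity) hbase)

lemma eventually_ten_le_log_and_le_mul {m : ℕ → ℕ} {p : ℕ → ℝ} (hm : Tendsto m atTop atTop)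
    (h1 : Tendsto (fun n : ℕ => (n : ℝ) / (m n : ℝ)) atTop (𝓝 0))
    (h2 : Tendsto (fun n : ℕ => (n : ℝ) * p n / Real.log ((m n : ℝ) / (n : ℝ))) atTop atTop) :
    ∀ᶠ n : ℕ in atTop, 10 ≤ Real.log (3 / 4 * (m n / n)) ∧
      30 * Real.log (3 / 4 * (m n / n)) ≤ n * p n := by
  have hpos : ∀ᶠ n : ℕ in atTop, 0 < (n : ℝ) / m n := by
    filter_upwards [eventually_gt_atTop 0, hm.eventually_gt_atTop 0] with n hn hmn
    positivity
  have hratio : Tendsto (fun n : ℕ => (m n : ℝ) / n) atTop atTop :=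
    (tendsto_nhdsWithin_iff.mpr ⟨h1, hpos⟩).inv_tendsto_nhdsGT_zero.congr
      fun n => inv_div (n : ℝ) (m n)
  have hlog : Tendsto (fun n : ℕ => Real.log (3 / 4 * (m n / n))) atTop atTop :=
    Real.tendsto_log_atTop.comp (hratio.const_mul_atTop (by norm_num))
  filter_upwards [hlog.eventually_ge_atTop 10, h2.eventually_ge_atTop 30] with n hL hnp
  obtain ⟨hm, hn⟩ := cast_pos_of_log_pos (a := m n) (b := n) (by linarith)
  have hlog_le : Real.log (3 / 4 * (m n / n)) ≤ Real.log (m n / n) :=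
    Real.log_le_log (by positivity) (by linarith [div_pos hm hn])
  rw [le_div_iff₀ (by linarith)] at hnp
  exact ⟨hL, by linarith⟩

/-- Equation (Eq:MSduze): if `n = o(m)` and `np / ln(m/n) → ∞`, then (eventually)
for each fixed `S` with `|S| ≥ n/2` we have `P(M_S ≥ 2δm) ≤ e^{-n}`, and the
probability that some `S` with `|S| ≥ n/2` has `M_S ≥ 2δm` tends to `0`. -/
theorem MS_union_bound (m : ℕ → ℕ) (p : ℕ → ℝ)
    (hp : ∀ n, 0 ≤ p n ∧ p n ≤ 1)
    (hm : Tendsto m atTop atTop)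
    (h1 : Tendsto (fun n : ℕ => (n : ℝ) / (m n : ℝ)) atTop (nhds 0))
    (h2 : Tendsto (fun n : ℕ => (n : ℝ) * p n / Real.log ((m n : ℝ) / (n : ℝ)))
      atTop atTop) :
    (∀ᶠ n : ℕ in atTop, ∀ S : Finset (Fin n), n ≤ 2 * S.card →
      rigMeasure n (m n) (p n)
          {ω | 2 * deltan m n * (m n : ℝ) ≤ (MS ω S (epsn m p n) (p n) : ℝ)} ≤
        ENNReal.ofReal (Real.exp (-(n : ℝ)))) ∧
    Tendsto (fun n : ℕ => rigMeasure n (m n) (p n)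
        {ω | ∃ S : Finset (Fin n), n ≤ 2 * S.card ∧
          2 * deltan m n * (m n : ℝ) ≤ (MS ω S (epsn m p n) (p n) : ℝ)})
      atTop (nhds 0) := by
  have hfixed : ∀ᶠ n : ℕ in atTop, ∀ S : Finset (Fin n), n ≤ 2 * S.card →
      rigMeasure n (m n) (p n)
          {ω | 2 * deltan m n * (m n : ℝ) ≤ (MS ω S (epsn m p n) (p n) : ℝ)} ≤
        ENNReal.ofReal (Real.exp (-(n : ℝ))) :=
    (eventually_ten_le_log_and_le_mul hm h1 h2).mono fun n ⟨hL, hnp⟩ =>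
      rigMeasure_two_mul_deltan_le_MS_le (hp n).2 hL hnp
  refine ⟨hfixed, tendsto_of_tendsto_of_tendsto_of_le_of_le' tendsto_const_nhds
    tendsto_two_pow_mul_ofReal_exp_neg (.of_forall fun _ => zero_le) ?_⟩
  filter_upwards [hfixed] with n hn
  simpa [Fintype.card_finset] using measure_setOf_exists_le _ _ _ hn

end RIG
end
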